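/- arXiv:2409.19360 — 5 statements merged into one kernel-verified Lean document; each statement's English description precedes it below -/
import Mathlib

section
/- The filling process has the diamond property: if P filling-moves to Q and P filling-moves to R with Q ≠ R, then there exists a set T such that Q filling-moves to T and R filling-moves to T. -/
open scoped symmDiff

/-- The left translate `gS` of a finite shape `S` in a group `G`. -/
def gset {G : Type*} [Group G] (g : G) (S : Finset G) : Set G :=
  (fun s => g * s) '' (S : Set G)

/-- A `(C,S)`-filling move: `P ⊊ Q`, some translate `gS` meets `P` in exactly
`|S| - 1` elements, and `Q = P ∪ gC`. -/
def FillMove {G : Type*} [Group G] (C S : Finset G) (P Q : Set G) : Prop :=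
  P ⊂ Q ∧ ∃ g : G, (P ∩ gset g S).ncard = S.card - 1 ∧ Q = P ∪ gset g C

/-! A filling move adds exactly one point: the unique point of `gS` missing from `P`, which
must lie in `gC`. Two different moves from `P` add different points `x₁ ≠ x₂`; adding `x₁`
does not change `gS₂ \ P = {x₂}` and vice versa, so each move can still be made after the
other, and both orders lead to `P ∪ {x₁, x₂}`. -/

namespace Set

variable {α : Type*} {A B P : Set α} {x y : α}

theorem sdiff_eq_singleton_of_ncard_inter (hA : A.Finite) (hP : (P ∩ A).ncard = A.ncard - 1)
    (hy : y ∈ A \ P) : A \ P = {y} := by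
  have hsum := ncard_inter_add_ncard_sdiff_eq_ncard A P hA
  have hpos : 0 < (A \ P).ncard := (ncard_pos hA.sdiff).2 ⟨y, hy⟩
  rw [inter_comm, hP] at hsum
  have hle : (A \ P).ncard ≤ 1 := by omega
  exact Subsingleton.eq_singleton_of_mem ((ncard_le_one hA.sdiff).1 hle) hy

theorem ncard_inter_add_one_of_sdiff_eq_singleton (hA : A.Finite) (h : A \ P = {x}) :
    (P ∩ A).ncard + 1 = A.ncard := by
  rw [inter_comm, ← ncard_singleton x, ← h, ncard_inter_add_ncard_sdiff_eq_ncard A P hA]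

theorem union_eq_insert_of_sdiff_eq_singleton (hBA : B ⊆ A) (h : A \ P = {x}) (hx : x ∈ B) :
    P ∪ B = insert x P := by
  refine Subset.antisymm (union_subset (subset_insert x P) fun z hz => ?_)
    (insert_subset (Or.inr hx) subset_union_left)
  by_cases hzP : z ∈ P
  · exact Or.inr hzP
  · exact Or.inl (h ▸ ⟨hBA hz, hzP⟩ : z ∈ ({x} : Set α))

theorem sdiff_insert_eq_singleton (h : A \ P = {x}) (hyx : y ≠ x) : A \ insert y P = {x} := by
  rw [insert_eq, union_comm, ← sdiff_sdiff, h,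
    sdiff_singleton_eq_self (mem_singleton_iff.not.2 hyx)]

end Set

section Group

variable {G : Type*} [Group G]

theorem finite_gset (g : G) (S : Finset G) : (gset g S).Finite :=
  S.finite_toSet.image _

theorem ncard_gset (g : G) (S : Finset G) : (gset g S).ncard = S.card := by
  rw [gset, Set.ncard_image_of_injective _ (mul_right_injective g), Set.ncard_coe_finset]

theorem gset_mono {C S : Finset G} (hCS : C ⊆ S) (g : G) : gset g C ⊆ gset g S :=
  Set.image_mono (by exact_mod_cast hCS)

theorem fillMove_iff_exists_insert {C S : Finset G} (hCS : C ⊆ S) {P Q : Set G} :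
    FillMove C S P Q ↔
      ∃ g x, gset g S \ P = {x} ∧ x ∈ gset g C ∧ Q = insert x P := by
  constructor
  · rintro ⟨hPQ, g, hcard, rfl⟩
    obtain ⟨x, hxQ, hxP⟩ := Set.exists_of_ssubset hPQ
    have hxC : x ∈ gset g C := hxQ.resolve_left hxP
    have hS : gset g S \ P = {x} :=
      Set.sdiff_eq_singleton_of_ncard_inter (finite_gset g S)
        (by rwa [ncard_gset]) ⟨gset_mono hCS g hxC, hxP⟩
    exact ⟨g, x, hS, hxC, Set.union_eq_insert_of_sdiff_eq_singleton (gset_mono hCS g) hS hxC⟩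
  · rintro ⟨g, x, hS, hxC, rfl⟩
    have hxP : x ∉ P := (hS.symm ▸ Set.mem_singleton x : x ∈ gset g S \ P).2
    have hcard := Set.ncard_inter_add_one_of_sdiff_eq_singleton (finite_gset g S) hS
    rw [ncard_gset] at hcard
    exact ⟨Set.ssubset_insert hxP, g, by omega,
      (Set.union_eq_insert_of_sdiff_eq_singleton (gset_mono hCS g) hS hxC).symm⟩

end Group

/-- The filling process has the diamond property. -/
theorem fillMove_diamond {G : Type*} [Group G] (C S : Finset G) (hCS : C ⊆ S)
    (P Q R : Set G) (hQ : FillMove C S P Q) (hR : FillMove C S P R) (hne : Q ≠ R) :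
    ∃ T : Set G, FillMove C S Q T ∧ FillMove C S R T := by
  obtain ⟨g₁, x₁, hS₁, hC₁, rfl⟩ := (fillMove_iff_exists_insert hCS).1 hQ
  obtain ⟨g₂, x₂, hS₂, hC₂, rfl⟩ := (fillMove_iff_exists_insert hCS).1 hR
  have hx : x₁ ≠ x₂ := by rintro rfl; exact hne rfl
  refine ⟨insert x₁ (insert x₂ P), ?_, ?_⟩
  · exact (fillMove_iff_exists_insert hCS).2
      ⟨g₂, x₂, Set.sdiff_insert_eq_singleton hS₂ hx, hC₂, Set.insert_comm _ _ _⟩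
  · exact (fillMove_iff_exists_insert hCS).2
      ⟨g₁, x₁, Set.sdiff_insert_eq_singleton hS₁ hx.symm, hC₁, rfl⟩
end

section
/- The groups ℤ^d have the finite filling property: for every non-linear finite shape S ⊆ ℤ^d, the S-filling closure of every finite set is finite. -/
/-- The translate `v + S` of a finite shape `S ⊆ ℤ^d`. -/
def vset {d : ℕ} (v : Fin d → ℤ) (S : Finset (Fin d → ℤ)) : Set (Fin d → ℤ) :=
  (fun s => v + s) '' (S : Set (Fin d → ℤ))

/-- An `S`-filling move in `ℤ^d`: some translate `v + S` meets `P` in exactly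
`|S| - 1` elements, and the missing element is added. -/
def AddFillMove {d : ℕ} (S : Finset (Fin d → ℤ)) (P Q : Set (Fin d → ℤ)) : Prop :=
  P ⊂ Q ∧ ∃ v : Fin d → ℤ, (P ∩ vset v S).ncard = S.card - 1 ∧ Q = P ∪ vset v S

/-- The `S`-filling closure in `ℤ^d`. -/
def addFillClosure {d : ℕ} (S : Finset (Fin d → ℤ)) (P : Set (Fin d → ℤ)) :
    Set (Fin d → ℤ) :=
  {x | ∃ Q : Set (Fin d → ℤ), Relation.ReflTransGen (AddFillMove S) P Q ∧ x ∈ Q}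

/-- A finite shape in `ℤ^d` is linear if it is contained in a coset of a cyclic
subgroup. -/
def IsLinearShape {d : ℕ} (S : Finset (Fin d → ℤ)) : Prop :=
  ∃ v w : Fin d → ℤ, (S : Set (Fin d → ℤ)) ⊆ {x | ∃ n : ℤ, x = v + n • w}

namespace ZFill

variable {d : ℕ}

/-- Coercion of a lattice point to a real vector. -/
def ι (x : Fin d → ℤ) : Fin d → ℝ := fun i => (x i : ℝ)

lemma ι_add (a b : Fin d → ℤ) : ι (a + b) = ι a + ι b := by
  funext i; simp [ι]

lemma ι_inj {a b : Fin d → ℤ} (h : ι a = ι b) : a = b := by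
  funext i
  have : ((a i : ℝ)) = (b i : ℝ) := congrFun h i
  exact_mod_cast this

/-- Real pairing. -/
def pr (v y : Fin d → ℝ) : ℝ := ∑ i, v i * y i

lemma pr_comm (v y : Fin d → ℝ) : pr v y = pr y v := by
  simp [pr, mul_comm]

lemma pr_add_left (v w y : Fin d → ℝ) : pr (v + w) y = pr v y + pr w y := by
  simp [pr, add_mul, Finset.sum_add_distrib]

lemma pr_smul_left (t : ℝ) (v y : Fin d → ℝ) : pr (t • v) y = t * pr v y := by
  simp [pr, Finset.mul_sum, mul_assoc]

lemma pr_neg_left (v y : Fin d → ℝ) : pr (-v) y = - pr v y := by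
  simp [pr, Finset.sum_neg_distrib]

lemma pr_add_right (v y z : Fin d → ℝ) : pr v (y + z) = pr v y + pr v z := by
  simp [pr, mul_add, Finset.sum_add_distrib]

lemma pr_sub_right (v y z : Fin d → ℝ) : pr v (y - z) = pr v y - pr v z := by
  simp [pr, mul_sub, Finset.sum_sub_distrib]

lemma pr_smul_right (t : ℝ) (v y : Fin d → ℝ) : pr v (t • y) = t * pr v y := by
  simp [pr, Finset.mul_sum]; ring_nf
  simp [mul_comm, mul_left_comm]

lemma pr_self_pos {v : Fin d → ℝ} (hv : v ≠ 0) : 0 < pr v v := by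
  obtain ⟨i, hi⟩ := Function.ne_iff.mp hv
  have : (0:ℝ) < v i * v i := mul_self_pos.mpr hi
  exact Finset.sum_pos' (fun j _ => mul_self_nonneg _) ⟨i, Finset.mem_univ i, this⟩

/-- A "good" functional: its maximum on `S` is attained at least twice. -/
def Good (S : Finset (Fin d → ℤ)) (v : Fin d → ℝ) : Prop :=
  ∃ a ∈ S, ∃ b ∈ S, a ≠ b ∧ (∀ s ∈ S, pr v (ι s) ≤ pr v (ι a)) ∧ pr v (ι a) = pr v (ι b)


lemma linear_of_card_le_one {S : Finset (Fin d → ℤ)} (h : S.card ≤ 1) :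
    IsLinearShape S := by
  rcases S.eq_empty_or_nonempty with rfl | ⟨a, ha⟩
  · exact ⟨0, 0, by simp⟩
  · refine ⟨a, 0, fun x hx => ⟨0, ?_⟩⟩
    have := Finset.card_le_one.mp h x hx a ha
    simp [this]

/-- If every element of `S` differs from `a0` by a real multiple of a fixed
nonzero integer vector `u`, then `S` is a linear shape. -/
lemma linear_of_real_collinear {S : Finset (Fin d → ℤ)} (a0 u : Fin d → ℤ)
    (hu : u ≠ 0)
    (hcol : ∀ s ∈ S, ∃ r : ℝ, ∀ i, ((s i - a0 i : ℤ) : ℝ) = r * (u i : ℝ)) :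
    IsLinearShape S := by
  classical
  set g : ℤ := Finset.univ.gcd u with hg
  have hgdvd : ∀ i, g ∣ u i := fun i => Finset.gcd_dvd (Finset.mem_univ i)
  have hg0 : g ≠ 0 := by
    intro h0
    apply hu
    funext i
    exact Finset.gcd_eq_zero_iff.mp h0 i (Finset.mem_univ i)
  set w : Fin d → ℤ := fun i => u i / g with hw
  have huw : ∀ i, u i = g * w i := fun i => (Int.mul_ediv_cancel' (hgdvd i)).symm
  -- any common divisor of all `w i` is a unit
  have hwunit : ∀ q : ℤ, (∀ i, q ∣ w i) → IsUnit q := by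
    intro q hq
    have h1 : g * q ∣ g := by
      apply Finset.dvd_gcd
      intro i _
      exact (huw i) ▸ mul_dvd_mul_left g (hq i)
    have h2 : q ∣ 1 := (mul_dvd_mul_iff_left hg0).mp (by rw [mul_one]; exact h1)
    exact isUnit_of_dvd_one h2
  obtain ⟨i0, hi0⟩ := Function.ne_iff.mp hu
  rw [Pi.zero_apply] at hi0
  have hwi0 : w i0 ≠ 0 := by
    intro h0
    exact hi0 (by rw [huw i0, h0, mul_zero])
  refine ⟨a0, w, fun s hs => ?_⟩
  obtain ⟨r, hr⟩ := hcol s hs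
  set ρ : ℝ := r * (g : ℝ) with hρ
  have hρw : ∀ i, ((s i - a0 i : ℤ) : ℝ) = ρ * (w i : ℝ) := by
    intro i
    rw [hr i, huw i]
    push_cast
    ring
  set p : ℤ := s i0 - a0 i0 with hp
  set q : ℤ := w i0 with hq2
  have hpq : ∀ i, (s i - a0 i) * q = p * w i := by
    intro i
    have h2 : (p : ℝ) = ρ * (q : ℝ) := by rw [hp, hq2]; exact hρw i0
    have h1 : ((s i - a0 i : ℤ) : ℝ) * (q : ℝ) = (p : ℝ) * ((w i : ℤ) : ℝ) := by
      rw [hρw i, h2]; ring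
    exact_mod_cast h1
  set e : ℤ := (p.gcd q : ℤ) with he
  have hgcdpos : 0 < p.gcd q := Nat.pos_of_ne_zero (fun h0 => hwi0 ((Int.gcd_eq_zero_iff.mp h0).2))
  have he0 : e ≠ 0 := by
    rw [he]
    exact_mod_cast hgcdpos.ne'
  set p' : ℤ := p / e with hp'
  set q' : ℤ := q / e with hq'
  have hpe : p = e * p' := (Int.mul_ediv_cancel' (Int.gcd_dvd_left p q)).symm
  have hqe : q = e * q' := (Int.mul_ediv_cancel' (Int.gcd_dvd_right p q)).symm
  have hcop : IsCoprime q' p' := by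
    rw [Int.isCoprime_iff_gcd_eq_one, Int.gcd_comm]
    exact Int.gcd_div_gcd_div_gcd hgcdpos
  have hpq' : ∀ i, (s i - a0 i) * q' = p' * w i := by
    intro i
    have h2 := hpq i
    have h1 : e * ((s i - a0 i) * q') = e * (p' * w i) := by
      calc e * ((s i - a0 i) * q') = (s i - a0 i) * (e * q') := by ring
        _ = (e * p') * w i := by rw [← hqe, ← hpe]; exact h2
        _ = e * (p' * w i) := by ring
    exact mul_left_cancel₀ he0 h1
  have hq'unit : IsUnit q' := by
    apply hwunit
    intro i
    have : q' ∣ p' * w i := ⟨s i - a0 i, by rw [← hpq' i]; ring⟩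
    exact hcop.dvd_of_dvd_mul_left this
  have hq'sq : q' * q' = 1 := by
    rcases Int.isUnit_iff.mp hq'unit with h | h <;> rw [h] <;> ring
  refine ⟨p' * q', ?_⟩
  funext i
  have h1 : (s i - a0 i) * (q' * q') = (p' * q') * w i := by
    have h3 := hpq' i
    calc (s i - a0 i) * (q' * q') = ((s i - a0 i) * q') * q' := by ring
      _ = (p' * w i) * q' := by rw [h3]
      _ = (p' * q') * w i := by ring
  rw [hq'sq, mul_one] at h1
  have : s i = a0 i + (p' * q') * w i := by linarith
  simpa [Pi.add_apply, Pi.smul_apply, smul_eq_mul] using this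


/-- Non-linearity gives, for every real direction `z ≠ 0`, a pair of points of
`S` whose difference is not parallel to `z`. -/
lemma exists_nonpara {S : Finset (Fin d → ℤ)} (hS : ¬ IsLinearShape S)
    (z : Fin d → ℝ) (hz : z ≠ 0) :
    ∃ a ∈ S, ∃ b ∈ S, ∀ t : ℝ, ι b - ι a ≠ t • z := by
  by_contra hcon
  push_neg at hcon
  apply hS
  rcases le_or_gt S.card 1 with hc | hc
  · exact linear_of_card_le_one hc
  obtain ⟨a0, ha0, b0, hb0, hab⟩ := Finset.one_lt_card.mp hc
  obtain ⟨t0, ht0⟩ := hcon a0 ha0 b0 hb0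
  have ht00 : t0 ≠ 0 := by
    intro h0
    rw [h0, zero_smul, sub_eq_zero] at ht0
    exact hab.symm (ι_inj ht0)
  apply linear_of_real_collinear a0 (b0 - a0) (sub_ne_zero.mpr hab.symm)
  intro s hs
  obtain ⟨ts, hts⟩ := hcon a0 ha0 s hs
  refine ⟨ts / t0, fun i => ?_⟩
  have h1 : (ι s - ι a0) i = ts * z i := by rw [hts]; simp
  have h2 : (ι b0 - ι a0) i = t0 * z i := by rw [ht0]; simp
  have h3 : ((b0 - a0) i : ℝ) = (ι b0 - ι a0) i := by simp [ι]
  have h4 : ((s i - a0 i : ℤ) : ℝ) = (ι s - ι a0) i := by simp [ι]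
  rw [h4, h1, h3, h2]
  field_simp

/-- Tilting: given a strict maximizer `s0` of `z` on `S` and `w2 ⊥ z`, either
we can tilt to a good functional positive on `z`, or `w2` is maximized at `s0`. -/
lemma tilt {S : Finset (Fin d → ℤ)} {z : Fin d → ℝ} (hz : z ≠ 0)
    {s0 : Fin d → ℤ} (hs0 : s0 ∈ S)
    (hstrict : ∀ s ∈ S, s ≠ s0 → pr z (ι s) < pr z (ι s0))
    (w2 : Fin d → ℝ) (horth : pr w2 z = 0) :
    (∃ v, Good S v ∧ 0 < pr v z) ∨ (∀ s ∈ S, pr w2 (ι s) ≤ pr w2 (ι s0)) := by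
  classical
  set T := S.erase s0 with hT
  rcases T.eq_empty_or_nonempty with hTe | hTne
  · right
    intro s hs
    rcases eq_or_ne s s0 with rfl | hne
    · exact le_refl _
    · exfalso
      have : s ∈ T := Finset.mem_erase.mpr ⟨hne, hs⟩
      rw [hTe] at this
      exact absurd this (Finset.notMem_empty s)
  set ts : (Fin d → ℤ) → ℝ :=
    fun s => (pr w2 (ι s) - pr w2 (ι s0)) / (pr z (ι s0) - pr z (ι s)) with hts
  have hD : ∀ s ∈ T, 0 < pr z (ι s0) - pr z (ι s) := by
    intro s hsT
    obtain ⟨hne, hsS⟩ := Finset.mem_erase.mp hsT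
    linarith [hstrict s hsS hne]
  have hnum : ∀ s ∈ T, pr w2 (ι s) - pr w2 (ι s0) = ts s * (pr z (ι s0) - pr z (ι s)) := by
    intro s hsT
    rw [hts]
    field_simp [(hD s hsT).ne']
  set tstar := T.sup' hTne ts with htstar
  rcases le_or_gt tstar 0 with hle | hpos
  · right
    intro s hs
    rcases eq_or_ne s s0 with rfl | hne
    · exact le_refl _
    have hsT : s ∈ T := Finset.mem_erase.mpr ⟨hne, hs⟩
    have h1 : ts s ≤ 0 := le_trans (Finset.le_sup' ts hsT) hle
    have h2 := hnum s hsT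
    nlinarith [hD s hsT]
  · left
    obtain ⟨s1, hs1T, hs1⟩ := Finset.exists_mem_eq_sup' hTne ts
    have hs1S : s1 ∈ S := (Finset.mem_erase.mp hs1T).2
    have hs1ne : s0 ≠ s1 := Ne.symm (Finset.mem_erase.mp hs1T).1
    set v := w2 + tstar • z with hv
    have hval : ∀ y : Fin d → ℝ, pr v y = pr w2 y + tstar * pr z y := by
      intro y
      rw [hv, pr_add_left, pr_smul_left]
    have hmax : ∀ s ∈ S, pr v (ι s) ≤ pr v (ι s0) := by
      intro s hs
      rcases eq_or_ne s s0 with rfl | hne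
      · exact le_refl _
      have hsT : s ∈ T := Finset.mem_erase.mpr ⟨hne, hs⟩
      have h1 : ts s ≤ tstar := Finset.le_sup' ts hsT
      have h2 := hnum s hsT
      rw [hval, hval]
      nlinarith [hD s hsT]
    refine ⟨v, ⟨s0, hs0, s1, hs1S, hs1ne, hmax, ?_⟩, ?_⟩
    · have h2 := hnum s1 hs1T
      rw [hval, hval]
      rw [← hs1] at h2
      nlinarith [hD s1 hs1T]
    · rw [hval z, horth, pr_comm z z] at *
      have := pr_self_pos hz
      nlinarith

/-- For every nonzero real direction there is a good functional positive on it. -/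
lemma exists_good {S : Finset (Fin d → ℤ)} (hS : ¬ IsLinearShape S)
    (z : Fin d → ℝ) (hz : z ≠ 0) :
    ∃ v, Good S v ∧ 0 < pr v z := by
  classical
  obtain ⟨a, ha, b, hb, hnp⟩ := exists_nonpara hS z hz
  have hab : a ≠ b := by
    intro h
    exact hnp 0 (by rw [h, sub_self, zero_smul])
  have hSne : S.Nonempty := ⟨a, ha⟩
  obtain ⟨s0, hs0, hmax⟩ := S.exists_max_image (fun s => pr z (ι s)) hSne
  by_cases hdup : ∃ b' ∈ S, b' ≠ s0 ∧ pr z (ι b') = pr z (ι s0)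
  · obtain ⟨b', hb', hb'ne, hb'eq⟩ := hdup
    exact ⟨z, ⟨s0, hs0, b', hb', Ne.symm hb'ne, hmax, hb'eq.symm⟩, pr_self_pos hz⟩
  push_neg at hdup
  have hstrict : ∀ s ∈ S, s ≠ s0 → pr z (ι s) < pr z (ι s0) := by
    intro s hs hne
    exact lt_of_le_of_ne (hmax s hs) (hdup s hs hne)
  set c : ℝ := pr z (ι b - ι a) / pr z z with hc
  set w2 : Fin d → ℝ := (ι b - ι a) - c • z with hw2
  have hzz : 0 < pr z z := pr_self_pos hz
  have horth : pr z w2 = 0 := by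
    rw [hw2, pr_sub_right, pr_smul_right, hc]
    field_simp
    ring
  have horth' : pr w2 z = 0 := by rw [pr_comm]; exact horth
  have hw2ne : w2 ≠ 0 := by
    intro h0
    apply hnp c
    rw [hw2] at h0
    have := sub_eq_zero.mp h0
    exact this
  have hkey : 0 < pr w2 (ι b) - pr w2 (ι a) := by
    have h1 : pr w2 (ι b - ι a) = pr w2 (w2 + c • z) := by rw [hw2]; ring_nf
    have h2 : pr w2 (w2 + c • z) = pr w2 w2 + c * pr w2 z := by
      rw [pr_add_right, pr_smul_right]
    have h3 : pr w2 (ι b - ι a) = pr w2 (ι b) - pr w2 (ι a) := pr_sub_right _ _ _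
    have h4 := pr_self_pos hw2ne
    rw [horth'] at h2
    nlinarith [h1, h2, h3]
  rcases tilt hz hs0 hstrict w2 horth' with h | hub
  · exact h
  rcases tilt hz hs0 hstrict (-w2) (by rw [pr_neg_left, horth', neg_zero]) with h | hub'
  · exact h
  exfalso
  have h1 := hub b hb
  have h2 := hub' a ha
  rw [pr_neg_left, pr_neg_left] at h2
  linarith


/-- The invariant region determined by good functionals and the seed set `P`. -/
def Bnd (S P : Finset (Fin d → ℤ)) : Set (Fin d → ℤ) :=
  {x | ∀ v, Good S v → ∃ p ∈ P, pr v (ι x) ≤ pr v (ι p)}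

lemma card_pos_of_nonlinear {S : Finset (Fin d → ℤ)} (hS : ¬ IsLinearShape S) :
    1 ≤ S.card := by
  by_contra h
  exact hS (linear_of_card_le_one (by omega))

lemma reach_subset {S P : Finset (Fin d → ℤ)} (hS : ¬ IsLinearShape S)
    {Q : Set (Fin d → ℤ)}
    (h : Relation.ReflTransGen (AddFillMove S) (↑P) Q) : Q ⊆ Bnd S P := by
  classical
  induction h with
  | refl =>
    intro p hp v _
    exact ⟨p, hp, le_refl _⟩
  | tail hQQ' hmove ih =>
    rename_i Q' Q''
    obtain ⟨hss, v, hcard, rfl⟩ := hmove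
    intro x hx
    rcases hx with hx | hx
    · exact ih hx
    by_cases hxQ : x ∈ Q'
    · exact ih hxQ
    -- `x` is the unique missing element of the translate
    have hfin : (vset v S).Finite := (S.finite_toSet).image _
    have hvsc : (vset v S).ncard = S.card := by
      rw [vset, Set.ncard_image_of_injective _ (add_right_injective v),
        Set.ncard_coe_finset]
    have hsub2 : Q' ∩ vset v S ⊆ vset v S := Set.inter_subset_right
    have hdiff : (vset v S \ Q').ncard = 1 := by
      have h1 : (vset v S \ (Q' ∩ vset v S)).ncard
          = (vset v S).ncard - (Q' ∩ vset v S).ncard :=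
        Set.ncard_diff hsub2 (hfin.subset hsub2)
      rw [Set.diff_inter_self_eq_diff] at h1
      rw [h1, hvsc, hcard]
      have := card_pos_of_nonlinear hS
      omega
    obtain ⟨m, hm⟩ := Set.ncard_eq_one.mp hdiff
    have hxm : x = m := by
      have : x ∈ vset v S \ Q' := ⟨hx, hxQ⟩
      rw [hm] at this
      exact this
    obtain ⟨s, hsS, hxs⟩ := hx
    have hother : ∀ s' ∈ S, s' ≠ s → v + s' ∈ Q' := by
      intro s' hs' hne
      by_contra hq
      have h1 : v + s' ∈ vset v S \ Q' := ⟨⟨s', hs', rfl⟩, hq⟩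
      rw [hm] at h1
      have h2 : v + s' = x := by rw [h1, hxm]
      rw [← hxs] at h2
      exact hne (add_left_cancel h2)
    intro u hu
    obtain ⟨a, ha, b, hb, hab, humax, hueq⟩ := hu
    -- pick a maximizer different from s
    obtain ⟨c, hcS, hcne, hcmax⟩ :
        ∃ c ∈ S, c ≠ s ∧ ∀ s'' ∈ S, pr u (ι s'') ≤ pr u (ι c) := by
      by_cases has : a = s
      · refine ⟨b, hb, ?_, ?_⟩
        · rw [← has]; exact Ne.symm hab
        · intro s'' hs''
          rw [← hueq]; exact humax s'' hs''
      · exact ⟨a, ha, has, humax⟩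
    have hcQ : v + c ∈ Q' := hother c hcS hcne
    obtain ⟨p, hp, hple⟩ := ih hcQ u ⟨a, ha, b, hb, hab, humax, hueq⟩
    refine ⟨p, hp, ?_⟩
    have h1 : pr u (ι x) = pr u (ι v) + pr u (ι s) := by
      rw [← hxs, ι_add, pr_add_right]
    have h2 : pr u (ι (v + c)) = pr u (ι v) + pr u (ι c) := by
      rw [ι_add, pr_add_right]
    have h3 := hcmax s hsS
    rw [h2] at hple
    linarith


lemma bnd_finite {S : Finset (Fin d → ℤ)} (hS : ¬ IsLinearShape S)
    (P : Finset (Fin d → ℤ)) : (Bnd S P).Finite := by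
  classical
  -- `d ≠ 0`
  have hd : d ≠ 0 := by
    intro h0
    apply hS
    subst h0
    exact ⟨0, 0, fun x _ => ⟨0, funext fun i => i.elim0⟩⟩
  rcases P.eq_empty_or_nonempty with rfl | hP
  · -- the bound set is empty since some good functional exists
    have hz : (fun _ : Fin d => (1:ℝ)) ≠ 0 := by
      intro h0
      have := congrFun h0 ⟨0, Nat.pos_of_ne_zero hd⟩
      simpa using this
    obtain ⟨v, hgood, -⟩ := exists_good hS _ hz
    have : Bnd S ∅ = ∅ := by
      ext x
      simp only [Bnd, Set.mem_setOf_eq, Set.mem_empty_iff_false, iff_false]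
      intro h
      obtain ⟨p, hp, -⟩ := h v hgood
      exact absurd hp (Finset.notMem_empty p)
    rw [this]
    exact Set.finite_empty
  -- main case : show the region is bounded
  have hbound : ∃ R : ℝ, ∀ x ∈ Bnd S P, ‖ι x‖ ≤ R := by
    by_contra hcon
    push_neg at hcon
    have hx : ∀ n : ℕ, ∃ x ∈ Bnd S P, (n : ℝ) < ‖ι x‖ := fun n => hcon n
    choose x hxB hxn using hx
    have hpos : ∀ n, (0:ℝ) < ‖ι (x n)‖ := fun n =>
      lt_of_le_of_lt (Nat.cast_nonneg n) (hxn n)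
    set y : ℕ → (Fin d → ℝ) := fun n => (‖ι (x n)‖)⁻¹ • ι (x n) with hy
    have hysph : ∀ n, y n ∈ Metric.sphere (0 : Fin d → ℝ) 1 := by
      intro n
      have : ‖y n‖ = 1 := by
        rw [hy]
        simp only [norm_smul, norm_inv, norm_norm]
        exact inv_mul_cancel₀ (hpos n).ne'
      simpa using this
    obtain ⟨z, hzs, φ, hφmono, hφtend⟩ :=
      (isCompact_sphere (0 : Fin d → ℝ) 1).tendsto_subseq hysph
    have hznorm : ‖z‖ = 1 := by simpa using hzs
    have hz0 : z ≠ 0 := by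
      intro h0
      rw [h0, norm_zero] at hznorm
      exact one_ne_zero hznorm.symm
    obtain ⟨v, hgood, hvz⟩ := exists_good hS z hz0
    have hcont : Continuous (pr v) :=
      continuous_finset_sum _ fun i _ => continuous_const.mul (continuous_apply i)
    have htend : Filter.Tendsto (fun n => pr v (y (φ n))) Filter.atTop (nhds (pr v z)) :=
      (hcont.continuousAt.tendsto).comp hφtend
    set M : ℝ := P.sup' hP (fun p => pr v (ι p)) with hM
    have hMb : ∀ n, pr v (ι (x n)) ≤ M := by
      intro n
      obtain ⟨p, hp, hle⟩ := hxB n v hgood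
      exact le_trans hle (Finset.le_sup' (fun p => pr v (ι p)) hp)
    have hev1 : ∀ᶠ n in Filter.atTop, pr v z / 2 < pr v (y (φ n)) :=
      Filter.Tendsto.eventually_const_lt (by linarith) htend
    have hev2 : ∀ᶠ n : ℕ in Filter.atTop, (2 * M / pr v z : ℝ) < (n : ℝ) :=
      tendsto_natCast_atTop_atTop.eventually_gt_atTop _
    obtain ⟨n, h1, h2⟩ := (hev1.and hev2).exists
    -- derive the contradiction
    have hnφ : (n : ℝ) ≤ (φ n : ℝ) := by exact_mod_cast hφmono.le_apply
    have hrn : (n : ℝ) < ‖ι (x (φ n))‖ := lt_of_le_of_lt (by exact_mod_cast hnφ) (hxn (φ n))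
    have hyval : pr v (ι (x (φ n))) = ‖ι (x (φ n))‖ * pr v (y (φ n)) := by
      rw [hy]
      simp only [pr_smul_right]
      rw [← mul_assoc, mul_inv_cancel₀ (hpos (φ n)).ne', one_mul]
    have hMn := hMb (φ n)
    rw [hyval] at hMn
    have hzpos : 0 < pr v z := hvz
    have hy2 : 0 < pr v (y (φ n)) := lt_trans (by linarith) h1
    have hbpos : 0 < ‖ι (x (φ n))‖ := hpos (φ n)
    have hbig : (2 * M / pr v z) * (pr v z / 2) < ‖ι (x (φ n))‖ * pr v (y (φ n)) := by
      have hAr : (2 * M / pr v z) < ‖ι (x (φ n))‖ := lt_trans h2 hrn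
      have hstep1 : (2 * M / pr v z) * (pr v z / 2) < ‖ι (x (φ n))‖ * (pr v z / 2) :=
        mul_lt_mul_of_pos_right hAr (by linarith)
      have hstep2 : ‖ι (x (φ n))‖ * (pr v z / 2) < ‖ι (x (φ n))‖ * pr v (y (φ n)) :=
        mul_lt_mul_of_pos_left h1 hbpos
      exact lt_trans hstep1 hstep2
    have heq : (2 * M / pr v z) * (pr v z / 2) = M := by
      field_simp
    rw [heq] at hbig
    linarith
  obtain ⟨R, hR⟩ := hbound
  set K : ℤ := ⌈R⌉ with hK
  have hsub : Bnd S P ⊆ ↑(Finset.Icc (fun _ : Fin d => -K) (fun _ : Fin d => K)) := by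
    intro x hx
    have hxR := hR x hx
    have hcoord : ∀ i, |x i| ≤ K := by
      intro i
      have h1 : |(x i : ℝ)| ≤ ‖ι x‖ := by
        have := norm_le_pi_norm (ι x) i
        simpa [ι, Real.norm_eq_abs] using this
      have h2 : |(x i : ℝ)| ≤ (K : ℝ) := le_trans h1 (le_trans hxR (Int.le_ceil R))
      have h3 : ((|x i| : ℤ) : ℝ) ≤ (K : ℝ) := by
        rw [Int.cast_abs]
        exact h2
      exact_mod_cast h3
    simp only [Finset.coe_Icc, Set.mem_Icc]
    constructor
    · intro i
      have := hcoord i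
      have := abs_le.mp (hcoord i)
      simpa using this.1
    · intro i
      have := abs_le.mp (hcoord i)
      simpa using this.2
  exact Set.Finite.subset (Finset.finite_toSet _) hsub

end ZFill

/-- `ℤ^d` has the finite filling property: for every non-linear finite shape `S`,
the `S`-filling closure of every finite set is finite. -/
theorem zd_finite_filling {d : ℕ} (S : Finset (Fin d → ℤ))
    (hS : ¬ IsLinearShape S) (P : Finset (Fin d → ℤ)) :
    (addFillClosure S (P : Set (Fin d → ℤ))).Finite := by
  apply Set.Finite.subset (ZFill.bnd_finite hS P)
  rintro x ⟨Q, hQ, hxQ⟩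
  exact ZFill.reach_subset hS hQ hxQ
end

section
/- For the triangle shape T = {(0,0),(1,0),(0,1)} on ℤ², the three edges of the triangle T_n (the horizontal edge {0,…,n-1}×{0}, the vertical edge {0}×{0,…,n-1}, and the diagonal {(i, n-1-i) : 0 ≤ i ≤ n-1}) are all in the same solitaire orbit. -/
open scoped symmDiff

/-- The triangle shape `T = {(0,0),(1,0),(0,1)}` in `ℤ²`. -/
def TriShape : Set (ℤ × ℤ) := {(0,0), (1,0), (0,1)}

/-- The translate `v + A` of a set `A ⊆ ℤ²`. -/
def tr (v : ℤ × ℤ) (A : Set (ℤ × ℤ)) : Set (ℤ × ℤ) := (fun p => v + p) '' A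

/-- A triangle solitaire move: for some `v`, both `P` and `Q` meet `v + T` in
exactly 2 elements and `P △ Q` is a 2-element subset of `v + T`. -/
def TriMove (P Q : Set (ℤ × ℤ)) : Prop :=
  ∃ v : ℤ × ℤ, (P ∩ tr v TriShape).ncard = 2 ∧ (Q ∩ tr v TriShape).ncard = 2 ∧
    (P ∆ Q) ⊆ tr v TriShape ∧ (P ∆ Q).ncard = 2

/-- The triangle `T_n = {(a,b) : a,b ≥ 0, a + b ≤ n - 1}`. -/
def TnSet (n : ℕ) : Set (ℤ × ℤ) :=
  {p | 0 ≤ p.1 ∧ 0 ≤ p.2 ∧ p.1 + p.2 < (n : ℤ)}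

/-- The horizontal edge `{0,…,n-1} × {0}` of `T_n`. -/
def horizEdge (n : ℕ) : Set (ℤ × ℤ) := {p | 0 ≤ p.1 ∧ p.1 < (n : ℤ) ∧ p.2 = 0}

/-- The vertical edge `{0} × {0,…,n-1}` of `T_n`. -/
def vertEdge (n : ℕ) : Set (ℤ × ℤ) := {p | p.1 = 0 ∧ 0 ≤ p.2 ∧ p.2 < (n : ℤ)}

/-- The diagonal edge `{(i, n-1-i) : 0 ≤ i ≤ n-1}` of `T_n`. -/
def diagEdge (n : ℕ) : Set (ℤ × ℤ) :=
  {p | 0 ≤ p.1 ∧ 0 ≤ p.2 ∧ p.1 + p.2 = (n : ℤ) - 1}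


lemma mem_tri (v p : ℤ × ℤ) :
    p ∈ tr v TriShape ↔ p = v ∨ p = (v.1 + 1, v.2) ∨ p = (v.1, v.2 + 1) := by
  simp [tr, TriShape, Prod.ext_iff]
  omega

/-- Intermediate configuration for the horizontal → vertical journey:
vertical stub of height `k`, a row at height `k` from `0` to `m`, and a row at
height `k+1` from `m` to `n-2-k`. -/
def cfgV (n k m : ℕ) : Set (ℤ × ℤ) :=
  {p | (p.1 = 0 ∧ 0 ≤ p.2 ∧ p.2 < (k : ℤ))
    ∨ (p.2 = (k : ℤ) ∧ 0 ≤ p.1 ∧ p.1 ≤ (m : ℤ))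
    ∨ (p.2 = (k : ℤ) + 1 ∧ (m : ℤ) ≤ p.1 ∧ p.1 ≤ (n : ℤ) - 2 - (k : ℤ))}

/-- Intermediate configuration for the horizontal → diagonal journey. -/
def cfgD (n k m : ℕ) : Set (ℤ × ℤ) :=
  {p | (p.1 + p.2 = (n : ℤ) - 1 ∧ 0 ≤ p.2 ∧ p.2 < (k : ℤ))
    ∨ (p.2 = (k : ℤ) + 1 ∧ 0 ≤ p.1 ∧ p.1 < (m : ℤ))
    ∨ (p.2 = (k : ℤ) ∧ (m : ℤ) ≤ p.1 ∧ p.1 ≤ (n : ℤ) - 1 - (k : ℤ))}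

lemma ncard_pair' (a b : ℤ × ℤ) (h : a ≠ b) : ({a, b} : Set (ℤ × ℤ)).ncard = 2 :=
  Set.ncard_pair h

lemma moveV (n k m : ℕ) (hm : (m : ℤ) + 1 ≤ (n : ℤ) - 1 - (k : ℤ)) :
    TriMove (cfgV n k (m + 1)) (cfgV n k m) := by
  refine ⟨((m : ℤ), (k : ℤ)), ?_, ?_, ?_, ?_⟩
  · have h : cfgV n k (m + 1) ∩ tr ((m : ℤ), (k : ℤ)) TriShape
        = {((m : ℤ), (k : ℤ)), ((m : ℤ) + 1, (k : ℤ))} := by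
      ext ⟨x, y⟩
      simp only [Set.mem_inter_iff, mem_tri, cfgV, Set.mem_setOf_eq,
        Set.mem_insert_iff, Set.mem_singleton_iff, Prod.mk.injEq]
      omega
    rw [h]
    exact ncard_pair' _ _ (by simp [Prod.ext_iff])
  · have h : cfgV n k m ∩ tr ((m : ℤ), (k : ℤ)) TriShape
        = {((m : ℤ), (k : ℤ)), ((m : ℤ), (k : ℤ) + 1)} := by
      ext ⟨x, y⟩
      simp only [Set.mem_inter_iff, mem_tri, cfgV, Set.mem_setOf_eq,
        Set.mem_insert_iff, Set.mem_singleton_iff, Prod.mk.injEq]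
      omega
    rw [h]
    exact ncard_pair' _ _ (by simp [Prod.ext_iff])
  all_goals
    have h : cfgV n k (m + 1) ∆ cfgV n k m
        = {((m : ℤ) + 1, (k : ℤ)), ((m : ℤ), (k : ℤ) + 1)} := by
      ext ⟨x, y⟩
      simp only [Set.mem_symmDiff, cfgV, Set.mem_setOf_eq,
        Set.mem_insert_iff, Set.mem_singleton_iff, Prod.mk.injEq]
      omega
    rw [h]
  · rintro p (rfl | rfl) <;> simp [mem_tri]
  · exact ncard_pair' _ _ (by simp [Prod.ext_iff])

lemma moveD (n k m : ℕ) (hm : (m : ℤ) ≤ (n : ℤ) - 2 - (k : ℤ)) :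
    TriMove (cfgD n k m) (cfgD n k (m + 1)) := by
  refine ⟨((m : ℤ), (k : ℤ)), ?_, ?_, ?_, ?_⟩
  · have h : cfgD n k m ∩ tr ((m : ℤ), (k : ℤ)) TriShape
        = {((m : ℤ), (k : ℤ)), ((m : ℤ) + 1, (k : ℤ))} := by
      ext ⟨x, y⟩
      simp only [Set.mem_inter_iff, mem_tri, cfgD, Set.mem_setOf_eq,
        Set.mem_insert_iff, Set.mem_singleton_iff, Prod.mk.injEq]
      omega
    rw [h]
    exact ncard_pair' _ _ (by simp [Prod.ext_iff])
  · have h : cfgD n k (m + 1) ∩ tr ((m : ℤ), (k : ℤ)) TriShape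
        = {((m : ℤ), (k : ℤ) + 1), ((m : ℤ) + 1, (k : ℤ))} := by
      ext ⟨x, y⟩
      simp only [Set.mem_inter_iff, mem_tri, cfgD, Set.mem_setOf_eq,
        Set.mem_insert_iff, Set.mem_singleton_iff, Prod.mk.injEq]
      omega
    rw [h]
    exact ncard_pair' _ _ (by simp [Prod.ext_iff])
  all_goals
    have h : cfgD n k m ∆ cfgD n k (m + 1)
        = {((m : ℤ), (k : ℤ)), ((m : ℤ), (k : ℤ) + 1)} := by
      ext ⟨x, y⟩
      simp only [Set.mem_symmDiff, cfgD, Set.mem_setOf_eq,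
        Set.mem_insert_iff, Set.mem_singleton_iff, Prod.mk.injEq]
      omega
    rw [h]
  · rintro p (rfl | rfl) <;> simp [mem_tri]
  · exact ncard_pair' _ _ (by simp [Prod.ext_iff])

lemma innerV (n k : ℕ) : ∀ m : ℕ, (m : ℤ) ≤ (n : ℤ) - 1 - (k : ℤ) →
    Relation.ReflTransGen TriMove (cfgV n k m) (cfgV n k 0) := by
  intro m
  induction m with
  | zero => intro _; exact Relation.ReflTransGen.refl
  | succ m ih =>
    intro h
    exact Relation.ReflTransGen.head (moveV n k m (by push_cast at h ⊢; omega))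
      (ih (by push_cast at h ⊢; omega))

lemma innerD (n k : ℕ) : ∀ m : ℕ, (m : ℤ) ≤ (n : ℤ) - 1 - (k : ℤ) →
    Relation.ReflTransGen TriMove (cfgD n k 0) (cfgD n k m) := by
  intro m
  induction m with
  | zero => intro _; exact Relation.ReflTransGen.refl
  | succ m ih =>
    intro h
    exact Relation.ReflTransGen.tail (ih (by push_cast at h ⊢; omega))
      (moveD n k m (by push_cast at h ⊢; omega))

lemma cfgV_stage (n k j : ℕ) (hj : (j : ℤ) = (n : ℤ) - 2 - (k : ℤ)) :
    cfgV n k 0 = cfgV n (k + 1) j := by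
  ext ⟨x, y⟩
  simp only [cfgV, Set.mem_setOf_eq]
  push_cast
  omega

lemma cfgD_stage (n k : ℕ) (hk : (k : ℤ) ≤ (n : ℤ) - 2) :
    cfgD n k (n - 1 - k) = cfgD n (k + 1) 0 := by
  ext ⟨x, y⟩
  simp only [cfgD, Set.mem_setOf_eq]
  push_cast
  omega

lemma outerV (n : ℕ) (hn : 1 ≤ n) : ∀ j : ℕ, j ≤ n - 1 →
    Relation.ReflTransGen TriMove (cfgV n (n - 1 - j) j) (cfgV n (n - 1) 0) := by
  intro j
  induction j with
  | zero => intro _; simp only [Nat.sub_zero]; exact Relation.ReflTransGen.refl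
  | succ j ih =>
    intro h
    have h1 : Relation.ReflTransGen TriMove (cfgV n (n - 1 - (j + 1)) (j + 1))
        (cfgV n (n - 1 - (j + 1)) 0) := innerV _ _ _ (by omega)
    have h2 : cfgV n (n - 1 - (j + 1)) 0 = cfgV n (n - 1 - j) j := by
      have e : n - 1 - (j + 1) + 1 = n - 1 - j := by omega
      rw [cfgV_stage n (n - 1 - (j + 1)) j (by omega), e]
    exact (h1.trans (h2 ▸ ih (by omega)))

lemma outerD (n : ℕ) (hn : 1 ≤ n) : ∀ k : ℕ, k ≤ n - 1 →
    Relation.ReflTransGen TriMove (cfgD n 0 0) (cfgD n k 0) := by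
  intro k
  induction k with
  | zero => intro _; exact Relation.ReflTransGen.refl
  | succ k ih =>
    intro h
    have h1 := ih (by omega)
    have h2 : Relation.ReflTransGen TriMove (cfgD n k 0) (cfgD n k (n - 1 - k)) :=
      innerD _ _ _ (by omega)
    have h3 : cfgD n k (n - 1 - k) = cfgD n (k + 1) 0 := cfgD_stage n k (by omega)
    exact (h1.trans h2).trans (h3 ▸ Relation.ReflTransGen.refl)

/-- The three edges of `T_n` are in the same triangle-solitaire orbit. -/
theorem edges_same_orbit (n : ℕ) (hn : 1 ≤ n) :
    Relation.ReflTransGen TriMove (horizEdge n) (vertEdge n) ∧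
    Relation.ReflTransGen TriMove (horizEdge n) (diagEdge n) := by
  have hhV : horizEdge n = cfgV n 0 (n - 1) := by
    ext ⟨x, y⟩
    simp only [horizEdge, cfgV, Set.mem_setOf_eq]
    omega
  have hvV : cfgV n (n - 1) 0 = vertEdge n := by
    ext ⟨x, y⟩
    simp only [vertEdge, cfgV, Set.mem_setOf_eq]
    omega
  have hhD : horizEdge n = cfgD n 0 0 := by
    ext ⟨x, y⟩
    simp only [horizEdge, cfgD, Set.mem_setOf_eq]
    omega
  have hdD : cfgD n (n - 1) 0 = diagEdge n := by
    ext ⟨x, y⟩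
    simp only [diagEdge, cfgD, Set.mem_setOf_eq]
    omega
  constructor
  · rw [hhV, ← hvV]
    have := outerV n hn (n - 1) le_rfl
    simpa using this
  · rw [hhD, ← hdD]
    exact outerD n hn (n - 1) le_rfl
end

section
/- For the triangle solitaire on ℤ², the orbit of the line L_n is contained in the set A_n of n-element subsets P of T_n such that for each 1 ≤ j ≤ n, P has at most j points in the j rightmost columns of T_n. -/
open scoped symmDiff

/-! A move exchanges a point `a` of `P` for a point `b ∉ P` such that `a`, `b` and a third point
`c ∈ P` are the vertices of a translate `v + T`. The triangle `T_n` contains the third vertex of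
`v + T` whenever it contains two of them, so `b ∈ T_n`. The column bound can only break when `b`
enters the `j` rightmost columns from outside; then `b = v + (1,0)`, and `a = v` and `c = v + (0,1)`
both lie in column `n - j - 1`. The move leaves the count in the `j + 1` rightmost columns
unchanged, and `c` is counted there but not in the `j` rightmost ones, so the bound at `j + 1`
gives the bound at `j`. -/

lemma ncard_sdiff_eq_one_of_symmDiff_subset {α : Type*} {P Q t : Set α} (ht : t.Finite)
    (hPQ : (P ∩ t).ncard = (Q ∩ t).ncard) (hsub : P ∆ Q ⊆ t) (hcard : (P ∆ Q).ncard = 2) :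
    (P \ Q).ncard = 1 ∧ (Q \ P).ncard = 1 := by
  have hPQt : P \ Q ⊆ t := fun p hp ↦ hsub (Or.inl hp)
  have hQPt : Q \ P ⊆ t := fun p hp ↦ hsub (Or.inr hp)
  have hPsplit := Set.ncard_inter_add_ncard_sdiff_eq_ncard (P ∩ t) Q (ht.inter_of_right P)
  have hQsplit := Set.ncard_inter_add_ncard_sdiff_eq_ncard (Q ∩ t) P (ht.inter_of_right Q)
  have hcommon : P ∩ t ∩ Q = Q ∩ t ∩ P := by
    ext; simp only [Set.mem_inter_iff]; tauto
  have hPt : (P ∩ t) \ Q = P \ Q :=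
    Set.ext fun p ↦ ⟨fun h ↦ ⟨h.1.1, h.2⟩, fun h ↦ ⟨⟨h.1, hPQt h⟩, h.2⟩⟩
  have hQt : (Q ∩ t) \ P = Q \ P :=
    Set.ext fun p ↦ ⟨fun h ↦ ⟨h.1.1, h.2⟩, fun h ↦ ⟨⟨h.1, hQPt h⟩, h.2⟩⟩
  rw [hPt] at hPsplit
  rw [hQt, ← hcommon] at hQsplit
  have hsum : (P \ Q).ncard + (Q \ P).ncard = 2 := by
    rw [← hcard, Set.symmDiff_def, Set.ncard_union_eq disjoint_sdiff_sdiff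
      (ht.subset hPQt) (ht.subset hQPt)]
  omega

lemma eq_insert_sdiff_of_sdiff_eq_singleton {α : Type*} {P Q : Set α} {a b : α}
    (ha : P \ Q = {a}) (hb : Q \ P = {b}) : Q = insert b (P \ {a}) := by
  ext p
  have h1 := Set.ext_iff.mp ha p
  have h2 := Set.ext_iff.mp hb p
  simp only [Set.mem_sdiff, Set.mem_singleton_iff, Set.mem_insert_iff] at h1 h2 ⊢
  tauto

lemma ncard_insert_sdiff_inter_le {α : Type*} {P S : Set α} {a b : α} (hP : P.Finite)
    (ha : a ∈ P) (hb : b ∉ P) (hab : b ∈ S → a ∈ S) :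
    (insert b (P \ {a}) ∩ S).ncard ≤ (P ∩ S).ncard := by
  by_cases hbS : b ∈ S
  · have hQS : insert b (P \ {a}) ∩ S = insert b ((P ∩ S) \ {a}) := by
      rw [Set.insert_inter_of_mem hbS, Set.sdiff_inter_right_comm]
    rw [hQS, Set.ncard_exchange (fun h : b ∈ P ∩ S ↦ hb h.1) ⟨ha, hab hbS⟩]
  · refine Set.ncard_le_ncard ?_ (hP.inter_of_left S)
    rintro p ⟨rfl | ⟨hp, -⟩, hpS⟩
    · exact absurd hpS hbS
    · exact ⟨hp, hpS⟩

lemma tr_triShape (v : ℤ × ℤ) : tr v TriShape = {v, v + (1, 0), v + (0, 1)} := by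
  simp [tr, TriShape, Set.image_insert_eq, Prod.mk_zero_zero]

lemma mem_tr_triShape {v p : ℤ × ℤ} :
    p ∈ tr v TriShape ↔ p = v ∨ p = v + (1, 0) ∨ p = v + (0, 1) := by
  rw [tr_triShape]; rfl

lemma tr_triShape_finite (v : ℤ × ℤ) : (tr v TriShape).Finite := by
  rw [tr_triShape]; exact Set.toFinite _

lemma tnSet_finite (n : ℕ) : (TnSet n).Finite := by
  refine (Set.finite_Icc ((0 : ℤ), (0 : ℤ)) (n, n)).subset ?_
  rintro ⟨x, y⟩ ⟨hx, hy, hxy⟩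
  exact ⟨⟨hx, hy⟩, by omega, by omega⟩

lemma mem_tnSet_of_mem_tr_triShape {n : ℕ} {v p q r : ℤ × ℤ} (hp : p ∈ tr v TriShape)
    (hq : q ∈ tr v TriShape) (hr : r ∈ tr v TriShape) (hpq : p ≠ q) (hpr : p ≠ r) (hqr : q ≠ r)
    (hpT : p ∈ TnSet n) (hqT : q ∈ TnSet n) : r ∈ TnSet n := by
  obtain ⟨vx, vy⟩ := v
  rw [mem_tr_triShape] at hp hq hr
  rcases hp with rfl | rfl | rfl <;> rcases hq with rfl | rfl | rfl <;>
    rcases hr with rfl | rfl | rfl <;> simp_all [TnSet] <;> omega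

lemma fst_eq_of_mem_tr_triShape {v a b c : ℤ × ℤ} (ha : a ∈ tr v TriShape)
    (hb : b ∈ tr v TriShape) (hc : c ∈ tr v TriShape) (hbc : b ≠ c) (hab : a.1 < b.1) :
    b.1 = a.1 + 1 ∧ c.1 = a.1 := by
  rw [mem_tr_triShape] at ha hb hc
  rcases ha with rfl | rfl | rfl <;> rcases hb with rfl | rfl | rfl <;>
    rcases hc with rfl | rfl | rfl <;> simp_all

lemma TriMove.exists_exchange {P Q : Set (ℤ × ℤ)} (h : TriMove P Q) :
    ∃ v a b c : ℤ × ℤ, a ∈ tr v TriShape ∧ b ∈ tr v TriShape ∧ c ∈ tr v TriShape ∧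
      a ∈ P ∧ b ∉ P ∧ c ∈ P ∧ c ≠ a ∧ Q = insert b (P \ {a}) := by
  obtain ⟨v, hP, hQ, hsub, hcard⟩ := h
  obtain ⟨hPQ, hQP⟩ :=
    ncard_sdiff_eq_one_of_symmDiff_subset (tr_triShape_finite v) (hP.trans hQ.symm) hsub hcard
  obtain ⟨a, ha⟩ := Set.ncard_eq_one.mp hPQ
  obtain ⟨b, hb⟩ := Set.ncard_eq_one.mp hQP
  have haPQ : a ∈ P \ Q := ha ▸ rfl
  have hbQP : b ∈ Q \ P := hb ▸ rfl
  obtain ⟨c, hc, hca⟩ := Set.exists_ne_of_one_lt_ncard (hP ▸ one_lt_two) a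
  exact ⟨v, a, b, c, hsub (Or.inl haPQ), hsub (Or.inr hbQP), hc.2, haPQ.1, hbQP.2, hc.1, hca,
    eq_insert_sdiff_of_sdiff_eq_singleton ha hb⟩

def rightCols (n j : ℕ) : Set (ℤ × ℤ) := {p | (n : ℤ) - j ≤ p.1}

lemma rightCols_subset_succ (n j : ℕ) : rightCols n j ⊆ rightCols n (j + 1) := by
  intro p hp
  simp only [rightCols, Set.mem_ofPred_eq] at hp ⊢
  push_cast
  omega

lemma ncard_insert_sdiff_inter_rightCols_le {n j : ℕ} {P : Set (ℤ × ℤ)} {v a b c : ℤ × ℤ}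
    (hP : P.Finite) (ha : a ∈ tr v TriShape) (hb : b ∈ tr v TriShape) (hc : c ∈ tr v TriShape)
    (haP : a ∈ P) (hbP : b ∉ P) (hcP : c ∈ P) (hca : c ≠ a)
    (hj : (P ∩ rightCols n j).ncard ≤ j) (hj' : (P ∩ rightCols n (j + 1)).ncard ≤ j + 1) :
    (insert b (P \ {a}) ∩ rightCols n j).ncard ≤ j := by
  set Q := insert b (P \ {a})
  by_cases hcross : b ∈ rightCols n j ∧ a ∉ rightCols n j
  · obtain ⟨hbj, haj⟩ := hcross
    simp only [rightCols, Set.mem_ofPred_eq, not_le] at hbj haj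
    obtain ⟨hba, hca1⟩ :=
      fst_eq_of_mem_tr_triShape ha hb hc (fun h ↦ hbP (h ▸ hcP)) (by omega)
    have haj' : a ∈ rightCols n (j + 1) := by
      simp only [rightCols, Set.mem_ofPred_eq]; push_cast; omega
    have hcQ : c ∈ Q := Or.inr ⟨hcP, hca⟩
    have hssub : Q ∩ rightCols n j ⊂ Q ∩ rightCols n (j + 1) := by
      refine (Set.ssubset_iff_of_subset
        (Set.inter_subset_inter_right Q (rightCols_subset_succ n j))).mpr ⟨c, ⟨hcQ, ?_⟩, ?_⟩
      · simp only [rightCols, Set.mem_ofPred_eq]; push_cast; omega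
      · simp only [rightCols, Set.mem_inter_iff, Set.mem_ofPred_eq]; omega
    have hQfin : Q.Finite := hP.sdiff.insert b
    refine Nat.lt_succ_iff.mp ?_
    calc (Q ∩ rightCols n j).ncard < (Q ∩ rightCols n (j + 1)).ncard :=
          Set.ncard_lt_ncard hssub (hQfin.inter_of_left _)
      _ ≤ (P ∩ rightCols n (j + 1)).ncard :=
          ncard_insert_sdiff_inter_le hP haP hbP fun _ ↦ haj'
      _ ≤ j + 1 := hj'
  · exact (ncard_insert_sdiff_inter_le hP haP hbP fun hbj ↦ by tauto).trans hj

/-- The set `A_n`. The bound on the `j` rightmost columns is required for every `j`: for `j = 0`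
and `j > n` it follows from the other two fields, and including it spares the induction step the
boundary case `j = n`. -/
structure MemAn (n : ℕ) (P : Set (ℤ × ℤ)) : Prop where
  subset_tnSet : P ⊆ TnSet n
  ncard_eq : P.ncard = n
  ncard_inter_rightCols_le (j : ℕ) : (P ∩ rightCols n j).ncard ≤ j

lemma MemAn.of_triMove {n : ℕ} {P Q : Set (ℤ × ℤ)} (hP : MemAn n P) (h : TriMove P Q) :
    MemAn n Q := by
  obtain ⟨v, a, b, c, ha, hb, hc, haP, hbP, hcP, hca, rfl⟩ := h.exists_exchange
  have hPfin : P.Finite := (tnSet_finite n).subset hP.subset_tnSet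
  have hbT : b ∈ TnSet n := mem_tnSet_of_mem_tr_triShape ha hc hb hca.symm
    (fun h ↦ hbP (h ▸ haP)) (fun h ↦ hbP (h ▸ hcP)) (hP.subset_tnSet haP) (hP.subset_tnSet hcP)
  refine ⟨?_, ?_, fun j ↦ ?_⟩
  · rintro p (rfl | ⟨hp, -⟩)
    exacts [hbT, hP.subset_tnSet hp]
  · rw [Set.ncard_exchange hbP haP, hP.ncard_eq]
  · exact ncard_insert_sdiff_inter_rightCols_le hPfin ha hb hc haP hbP hcP hca
      (hP.ncard_inter_rightCols_le j) (hP.ncard_inter_rightCols_le (j + 1))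

lemma horizEdge_eq_image (n : ℕ) :
    horizEdge n = (fun i : ℕ ↦ ((i : ℤ), (0 : ℤ))) '' Set.Iio n := by
  ext ⟨x, y⟩
  simp only [horizEdge, Set.mem_ofPred_eq, Set.mem_image, Set.mem_Iio, Prod.mk.injEq]
  constructor
  · rintro ⟨hx, hxn, rfl⟩
    exact ⟨x.toNat, by omega, by omega, rfl⟩
  · rintro ⟨i, hi, rfl, rfl⟩
    exact ⟨by omega, by exact_mod_cast hi, rfl⟩

lemma memAn_horizEdge (n : ℕ) : MemAn n (horizEdge n) where
  subset_tnSet := fun _ ⟨hx, hxn, hy⟩ ↦ ⟨hx, hy.ge, by omega⟩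
  ncard_eq := by
    rw [horizEdge_eq_image, Set.ncard_image_of_injective _ fun i j h ↦ by simpa using h,
      Set.ncard_Iio_nat]
  ncard_inter_rightCols_le j := by
    have hsub : horizEdge n ∩ rightCols n j ⊆
        (fun i : ℕ ↦ ((i : ℤ), (0 : ℤ))) '' Set.Ico (n - j) n := by
      rintro ⟨x, y⟩ ⟨⟨hx, hxn, rfl⟩, hxj⟩
      simp only [rightCols, Set.mem_ofPred_eq] at hx hxn hxj
      exact ⟨x.toNat, ⟨by omega, by omega⟩, by simp only [Prod.mk.injEq, and_true]; omega⟩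
    calc (horizEdge n ∩ rightCols n j).ncard
        ≤ ((fun i : ℕ ↦ ((i : ℤ), (0 : ℤ))) '' Set.Ico (n - j) n).ncard :=
          Set.ncard_le_ncard hsub (Set.toFinite _)
      _ ≤ (Set.Ico (n - j) n).ncard := Set.ncard_image_le (Set.toFinite _)
      _ ≤ j := by rw [Set.ncard_Ico_nat]; omega

/-- The orbit of the line `L_n` is contained in the set `A_n` of `n`-element
subsets of `T_n` having at most `j` points in the `j` rightmost columns. -/
theorem line_orbit_subset_An (n : ℕ) (Q : Set (ℤ × ℤ))
    (h : Relation.ReflTransGen TriMove (horizEdge n) Q) :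
    Q ⊆ TnSet n ∧ Q.ncard = n ∧
    ∀ j : ℕ, 1 ≤ j → j ≤ n →
      (Q ∩ {p : ℤ × ℤ | (n : ℤ) - (j : ℤ) ≤ p.1}).ncard ≤ j := by
  have hQ : MemAn n Q := by
    induction h with
    | refl => exact memAn_horizEdge n
    | tail _ hmove ih => exact ih.of_triMove hmove
  exact ⟨hQ.subset_tnSet, hQ.ncard_eq, fun j _ _ ↦ hQ.ncard_inter_rightCols_le j⟩
end

section
/- For the triangle shape S = {e, a, b} on the free group F₂, the solitaire orbit of the line L_n = {e, a, a², …, a^{n-1}} has cardinality (1/(2ⁿ√5))·((3+√5)ⁿ - (3-√5)ⁿ). -/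
open scoped symmDiff

/-- The free group on two generators. -/
abbrev F2 := FreeGroup Bool

/-- The generator `a` of `F₂`. -/
def fa : F2 := FreeGroup.of true

/-- The generator `b` of `F₂`. -/
def fb : F2 := FreeGroup.of false

/-- The triangle shape `S = {e, a, b}` on the free group. -/
def Sfree : Set F2 := {1, fa, fb}

/-- An `S`-solitaire move on the free group. -/
def FMove (P Q : Set F2) : Prop :=
  ∃ g : F2, (P ∩ (fun s => g * s) '' Sfree).ncard = 2 ∧
    (Q ∩ (fun s => g * s) '' Sfree).ncard = 2 ∧
    (P ∆ Q) ⊆ (fun s => g * s) '' Sfree ∧ (P ∆ Q).ncard = 2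

/-- The line `L_n = {e, a, a², …, a^{n-1}}` in the free group. -/
def lineF (n : ℕ) : Set F2 := {x | ∃ i : ℕ, i < n ∧ x = fa ^ i}

/-!
Send `2i ↦ aⁱ` and `2i + 1 ↦ aⁱb`; this embeds `ℤ` onto `X = {aⁱ} ∪ {aⁱb}`. Counting exponent
sums of `a` and `b` (and using `ab ≠ ba`) shows that a translate `g·S` meets `X` in two points only
when `g = aⁱ`, and `aⁱ·S` is the image of the window `{2i, 2i + 1, 2i + 2}`. Hence the orbit of
`L_n` is the image of the orbit of `{0, 2, …, 2n - 2}` under the solitaire on `ℤ` whose moves, in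
a window holding two points, move one of them to the free third point.

Describe a configuration of `n` tiles by a word `w` over `{E, A, B}`, tile `k` sitting at
`2k + δ(w k)` with `δ = 0, -1, 1`. The orbit consists of the words whose tiles occupy distinct
points of `[0, 2n - 2]`: a move rewrites the two tiles of one window, and conversely moving the
leftmost `A` (or else the rightmost `B`) back brings every such word down to `E⋯E`. Peeling off the first
letter gives a two-term recursion solved by `F(2n)` and `F(2n + 1)`; Binet's formula with
`φ² = (3 + √5)/2` gives the closed form.
-/

open Set Function Relation

section Solitaire

variable {α β ι κ : Type*}

def IsWindowMove (W P Q : Set α) : Prop :=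
  (P ∩ W).ncard = 2 ∧ (Q ∩ W).ncard = 2 ∧ P ∆ Q ⊆ W ∧ (P ∆ Q).ncard = 2

/-- `FMove` is, by definition, `ShapeMove fun g => (g * ·) '' Sfree`. -/
def ShapeMove (V : ι → Set α) (P Q : Set α) : Prop := ∃ i, IsWindowMove (V i) P Q

theorem IsWindowMove.symm {W P Q : Set α} (h : IsWindowMove W P Q) : IsWindowMove W Q P := by
  obtain ⟨hP, hQ, hsub, hcard⟩ := h
  exact ⟨hQ, hP, symmDiff_comm P Q ▸ hsub, symmDiff_comm P Q ▸ hcard⟩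

theorem ShapeMove.symm {V : ι → Set α} {P Q : Set α} (h : ShapeMove V P Q) : ShapeMove V Q P :=
  h.imp fun _ => IsWindowMove.symm

theorem sdiff_eq_sdiff_of_symmDiff_subset {W P Q : Set α} (h : P ∆ Q ⊆ W) : P \ W = Q \ W := by
  ext x
  have := @h x
  simp only [mem_symmDiff, mem_sdiff] at this ⊢
  tauto

theorem exists_eq_sdiff_singleton_of_ncard_add_one {T W : Set α} (hT : T ⊆ W) (hW : W.Finite)
    (h : T.ncard + 1 = W.ncard) : ∃ m ∈ W, T = W \ {m} := by
  obtain ⟨m, hm⟩ :=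
    ncard_eq_one.1 (by rw [ncard_sdiff hT (hW.subset hT)]; omega : (W \ T).ncard = 1)
  refine ⟨m, (hm.symm ▸ mem_singleton m : m ∈ W \ T).1, ?_⟩
  rw [← hm, sdiff_sdiff_cancel_left hT]

theorem IsWindowMove.exists_eq_sdiff_union {W P Q : Set α} (h : IsWindowMove W P Q)
    (hW : W.ncard = 3) : ∃ m ∈ P ∩ W, Q = P \ W ∪ (W \ {m}) := by
  obtain ⟨hP, hQ, hsub, hcard⟩ := h
  have hWfin : W.Finite := finite_of_ncard_ne_zero (by omega)
  obtain ⟨m, hmW, hQm⟩ :=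
    exists_eq_sdiff_singleton_of_ncard_add_one (T := Q ∩ W) inter_subset_right hWfin (by omega)
  refine ⟨m, ⟨?_, hmW⟩, by rw [← hQm, sdiff_eq_sdiff_of_symmDiff_subset hsub, sdiff_union_inter]⟩
  by_contra hmP
  have hPQ : P ∩ W = Q ∩ W := by
    refine eq_of_subset_of_ncard_le (fun x hx => ?_) (by omega) (hWfin.subset inter_subset_right)
    rw [hQm]
    exact ⟨hx.2, fun h => hmP ((mem_singleton_iff.1 h) ▸ hx.1)⟩
  have : P = Q := by
    rw [← sdiff_union_inter P W, ← sdiff_union_inter Q W, hPQ,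
      sdiff_eq_sdiff_of_symmDiff_subset hsub]
  simp [this] at hcard

theorem isWindowMove_sdiff_union {W P : Set α} {m : α} (hW : W.ncard = 3)
    (hP : (P ∩ W).ncard = 2) (hm : m ∈ P ∩ W) : IsWindowMove W P (P \ W ∪ (W \ {m})) := by
  obtain ⟨hmP, hmW⟩ := hm
  obtain ⟨m₀, hm₀W, hPm₀⟩ := exists_eq_sdiff_singleton_of_ncard_add_one (T := P ∩ W)
    inter_subset_right (finite_of_ncard_ne_zero (by omega)) (by omega)
  have hm₀P : m₀ ∉ P := fun h => by
    have : m₀ ∈ P ∩ W := ⟨h, hm₀W⟩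
    simp [hPm₀] at this
  have hne : m ≠ m₀ := ne_of_mem_of_not_mem hmP hm₀P
  have hQW : (P \ W ∪ (W \ {m})) ∩ W = W \ {m} := by
    ext x; simp only [mem_inter_iff, mem_union, mem_sdiff]; tauto
  have hsymm : P ∆ (P \ W ∪ (W \ {m})) = {m, m₀} := by
    ext x
    have hx := congrArg (x ∈ ·) hPm₀
    simp only [mem_inter_iff, mem_sdiff, mem_singleton_iff, eq_iff_iff] at hx
    simp only [mem_symmDiff, mem_union, mem_sdiff, mem_singleton_iff, mem_insert_iff]
    constructor
    · tauto
    · rintro (rfl | rfl)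
      · tauto
      · have := hne.symm; tauto
  refine ⟨hP, ?_, ?_, ?_⟩
  · rw [hQW, ncard_sdiff_singleton_of_mem hmW, hW]
  · rw [hsymm]; exact insert_subset hmW (singleton_subset_iff.2 hm₀W)
  · rw [hsymm, ncard_pair hne]

theorem IsWindowMove.ncard_eq {W P Q : Set α} (h : IsWindowMove W P Q) (hP : P.Finite) :
    Q.ncard = P.ncard := by
  obtain ⟨hPW, hQW, hsub, -⟩ := h
  have hdiff := sdiff_eq_sdiff_of_symmDiff_subset hsub
  have hQ : Q.Finite := by
    rw [← sdiff_union_inter Q W, ← hdiff]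
    exact (hP.subset sdiff_subset).union (finite_of_ncard_ne_zero (by omega))
  rw [← ncard_inter_add_ncard_sdiff_eq_ncard Q W hQ, ← ncard_inter_add_ncard_sdiff_eq_ncard P W hP,
    hPW, hQW, hdiff]

theorem isWindowMove_image_iff {f : α → β} (hf : Injective f) {W P Q : Set α} :
    IsWindowMove (f '' W) (f '' P) (f '' Q) ↔ IsWindowMove W P Q := by
  simp only [IsWindowMove, ← image_inter hf, ← image_symmDiff hf, ncard_image_of_injective _ hf,
    image_subset_image_iff hf]

theorem shapeMove_image_iff {f : α → β} (hf : Injective f) {V : κ → Set β} {W : ι → Set α}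
    (hV : ∀ k, (range f ∩ V k).Nontrivial → ∃ j, V k = f '' W j)
    (hW : ∀ j, ∃ k, V k = f '' W j) {P : Set α} {Q : Set β} :
    ShapeMove V (f '' P) Q ↔ ∃ P', ShapeMove W P P' ∧ Q = f '' P' := by
  constructor
  · rintro ⟨k, hmove⟩
    obtain ⟨x, y, hxy, hxy'⟩ := ncard_eq_two.1 hmove.1
    have hx : x ∈ f '' P ∩ V k := hxy' ▸ mem_insert x {y}
    have hy : y ∈ f '' P ∩ V k := hxy' ▸ mem_insert_of_mem x rfl
    obtain ⟨j, hj⟩ := hV k ⟨x, ⟨image_subset_range f P hx.1, hx.2⟩, y,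
      ⟨image_subset_range f P hy.1, hy.2⟩, hxy⟩
    have hQ : Q ⊆ range f := fun z hz => by
      by_cases hzP : z ∈ f '' P
      · exact image_subset_range f P hzP
      · exact image_subset_range f (W j) (hj ▸ hmove.2.2.1 (Or.inr ⟨hz, hzP⟩))
    rw [← image_preimage_eq_of_subset hQ, hj, isWindowMove_image_iff hf] at hmove
    exact ⟨f ⁻¹' Q, ⟨j, hmove⟩, (image_preimage_eq_of_subset hQ).symm⟩
  · rintro ⟨P', ⟨j, hmove⟩, rfl⟩
    obtain ⟨k, hk⟩ := hW j
    exact ⟨k, hk ▸ (isWindowMove_image_iff hf).2 hmove⟩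

theorem reflTransGen_image_iff {r : α → α → Prop} {s : β → β → Prop} {f : α → β}
    (h : ∀ a y, s (f a) y ↔ ∃ b, r a b ∧ y = f b) {a : α} {y : β} :
    ReflTransGen s (f a) y ↔ ∃ b, ReflTransGen r a b ∧ y = f b := by
  constructor
  · intro hy
    induction hy with
    | refl => exact ⟨a, .refl, rfl⟩
    | tail _ hst ih =>
      obtain ⟨b, hab, rfl⟩ := ih
      obtain ⟨c, hbc, rfl⟩ := (h b _).1 hst
      exact ⟨c, hab.tail hbc, rfl⟩
  · rintro ⟨b, hab, rfl⟩
    exact ReflTransGen.lift f (fun b c hbc => (h b _).2 ⟨c, hbc, rfl⟩) _ _ hab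

end Solitaire

namespace LineSolitaire

def window (i : ℤ) : Set ℤ := {2 * i, 2 * i + 1, 2 * i + 2}

theorem mem_window {i x : ℤ} : x ∈ window i ↔ 2 * i ≤ x ∧ x ≤ 2 * i + 2 := by
  simp only [window, mem_insert_iff, mem_singleton_iff]
  omega

theorem ncard_window (i : ℤ) : (window i).ncard = 3 :=
  ncard_eq_three.2 ⟨_, _, _, by omega, by omega, by omega, rfl⟩

abbrev Move : Set ℤ → Set ℤ → Prop := ShapeMove window

inductive Letter
  | E | A | B
  deriving DecidableEq

instance : Fintype Letter := ⟨{.E, .A, .B}, fun s => by cases s <;> simp⟩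

namespace Letter

def offset : Letter → ℤ
  | E => 0
  | A => -1
  | B => 1

@[simp] theorem offset_E : E.offset = 0 := rfl
@[simp] theorem offset_A : A.offset = -1 := rfl
@[simp] theorem offset_B : B.offset = 1 := rfl

theorem univ_eq : (Finset.univ : Finset Letter) = {E, A, B} := rfl

theorem offset_mem_Icc (s : Letter) : s.offset ∈ Icc (-1) 1 := by
  cases s <;> simp [offset]

@[simp] theorem offset_eq_zero_iff {s : Letter} : s.offset = 0 ↔ s = E := by
  cases s <;> simp [offset]

@[simp] theorem offset_eq_neg_one_iff {s : Letter} : s.offset = -1 ↔ s = A := by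
  cases s <;> simp [offset]

@[simp] theorem offset_eq_one_iff {s : Letter} : s.offset = 1 ↔ s = B := by
  cases s <;> simp [offset]

theorem offset_injective : Injective offset := by
  intro s t h; cases s <;> cases t <;> simp_all [offset]

end Letter

open Letter

section Tiles

variable {n : ℕ}

/-- Under `2i ↦ aⁱ`, `2i + 1 ↦ aⁱb`, letter `E` leaves tile `k` at `aᵏ`, `B` moves it to `aᵏb`
and `A` to `aᵏ⁻¹b`. -/
def pos (w : Fin n → Letter) (k : Fin n) : ℤ := 2 * k + (w k).offset

def config (w : Fin n → Letter) : Set ℤ := range (pos w)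

theorem finite_config (w : Fin n → Letter) : (config w).Finite := finite_range _

/-- `Fits 0 w` is the paper's condition on words (no `BA`, no initial `A`, no final `B`); the lower
bound `lo` is what remains of it on the tail of a word (`fits_cons_iff`). -/
def Fits (lo : ℤ) (w : Fin n → Letter) : Prop :=
  Injective (pos w) ∧ ∀ k, lo ≤ pos w k ∧ pos w k ≤ 2 * n - 2

theorem pos_mem_Icc (w : Fin n → Letter) (k : Fin n) :
    pos w k ∈ Icc (2 * (k : ℤ) - 1) (2 * k + 1) := by
  have := (w k).offset_mem_Icc
  simp only [pos, mem_Icc] at this ⊢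
  omega

theorem pos_monotone (w : Fin n → Letter) : Monotone (pos w) := by
  intro k l hkl
  have hk := pos_mem_Icc w k
  have hl := pos_mem_Icc w l
  rcases hkl.eq_or_lt with rfl | hlt
  · rfl
  · simp only [mem_Icc, Fin.lt_def] at hk hl hlt
    omega

theorem config_injOn (lo : ℤ) : InjOn (config (n := n)) {w | Fits lo w} := by
  intro w hw w' hw' h
  have hpos := ((pos_monotone w).strictMono_of_injective hw.1).range_inj
    ((pos_monotone w').strictMono_of_injective hw'.1) |>.1 h
  funext k
  apply offset_injective
  simpa [pos] using congrFun hpos k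

theorem coe_eq_or_of_pos_mem_window {w : Fin n → Letter} {k : Fin n} {i : ℤ}
    (h : pos w k ∈ window i) : (k : ℤ) = i ∨ (k : ℤ) = i + 1 := by
  have := pos_mem_Icc w k
  rw [mem_window] at h
  rw [mem_Icc] at this
  omega

theorem ncard_config_inter_window_le (w : Fin n → Letter) (i : ℤ) :
    (config w ∩ window i).ncard ≤ 2 := by
  calc (config w ∩ window i).ncard
      ≤ (pos w '' {k | (k : ℤ) = i ∨ (k : ℤ) = i + 1}).ncard := by
        refine ncard_le_ncard ?_ (toFinite _)
        rintro _ ⟨⟨k, rfl⟩, hk⟩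
        exact ⟨k, coe_eq_or_of_pos_mem_window hk, rfl⟩
    _ ≤ {k : Fin n | (k : ℤ) = i ∨ (k : ℤ) = i + 1}.ncard := ncard_image_le (toFinite _)
    _ ≤ ({i, i + 1} : Set ℤ).ncard :=
        ncard_le_ncard_of_injOn (fun k => (k : ℤ)) (fun k hk => hk)
          (fun k _ l _ h => Fin.ext (by simpa using h)) (toFinite _)
    _ = 2 := ncard_pair (by omega)

theorem tiles_of_one_lt_ncard {w : Fin n → Letter} {i : ℤ}
    (h : 1 < (config w ∩ window i).ncard) :
    0 ≤ i ∧ i + 1 < n ∧ ∀ k : Fin n, (k : ℤ) = i ∨ (k : ℤ) = i + 1 → pos w k ∈ window i := by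
  obtain ⟨_, _, ⟨⟨k₁, rfl⟩, h₁⟩, ⟨⟨k₂, rfl⟩, h₂⟩, hne⟩ :=
    (one_lt_ncard_iff ((finite_config w).inter_of_left _)).1 h
  have e₁ := coe_eq_or_of_pos_mem_window h₁
  have e₂ := coe_eq_or_of_pos_mem_window h₂
  have hk : (k₁ : ℤ) ≠ k₂ := fun hk => hne (congrArg _ (Fin.ext (by exact_mod_cast hk)))
  refine ⟨by omega, by omega, fun k hk' => ?_⟩
  obtain rfl | rfl : k = k₁ ∨ k = k₂ := by simp only [Fin.ext_iff]; omega
  exacts [h₁, h₂]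

def refill (w : Fin n → Letter) (i m : ℤ) (k : Fin n) : Letter :=
  if (k : ℤ) = i then (if m = 2 * i then B else E)
  else if (k : ℤ) = i + 1 then (if m = 2 * i + 2 then A else E)
  else w k

theorem pos_refill (w : Fin n → Letter) (i m : ℤ) (k : Fin n) :
    pos (refill w i m) k =
      if (k : ℤ) = i then 2 * i + (if m = 2 * i then 1 else 0)
      else if (k : ℤ) = i + 1 then 2 * i + 2 - (if m = 2 * i + 2 then 1 else 0)
      else pos w k := by
  unfold pos refill
  split_ifs <;> simp only [offset] <;> omega

theorem config_refill {w : Fin n → Letter} {i m : ℤ} (h : 1 < (config w ∩ window i).ncard)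
    (hm : m ∈ window i) : config (refill w i m) = config w \ window i ∪ (window i \ {m}) := by
  obtain ⟨hi, hin, htiles⟩ := tiles_of_one_lt_ncard h
  rw [mem_window] at hm
  ext x
  constructor
  · rintro ⟨k, rfl⟩
    by_cases hk : (k : ℤ) = i ∨ (k : ℤ) = i + 1
    · right
      rw [mem_sdiff, mem_window, mem_singleton_iff, pos_refill]
      split_ifs <;> omega
    · left
      rw [pos_refill, if_neg (by omega), if_neg (by omega)]
      exact ⟨mem_range_self k, fun hw => hk (coe_eq_or_of_pos_mem_window hw)⟩
  · rintro (⟨⟨k, rfl⟩, hk⟩ | ⟨hxW, hxm⟩)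
    · have hk' : ¬((k : ℤ) = i ∨ (k : ℤ) = i + 1) := fun h' => hk (htiles k h')
      refine ⟨k, ?_⟩
      rw [pos_refill, if_neg (by omega), if_neg (by omega)]
    · obtain ⟨j, hj⟩ : ∃ j : Fin n, (j : ℤ) = i := ⟨⟨i.toNat, by omega⟩, by simp; omega⟩
      obtain ⟨j', hj'⟩ : ∃ j : Fin n, (j : ℤ) = i + 1 :=
        ⟨⟨(i + 1).toNat, by omega⟩, by simp; omega⟩
      rw [mem_window] at hxW
      rw [mem_singleton_iff] at hxm
      have hx : x = pos (refill w i m) j ∨ x = pos (refill w i m) j' := by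
        rw [pos_refill, pos_refill, if_pos hj, if_neg (show (j' : ℤ) ≠ i by omega), if_pos hj']
        split_ifs <;> omega
      rcases hx with rfl | rfl <;> exact mem_range_self _

theorem isWindowMove_refill {w : Fin n → Letter} {i m : ℤ} (h : 1 < (config w ∩ window i).ncard)
    (hm : m ∈ config w ∩ window i) :
    IsWindowMove (window i) (config w) (config (refill w i m)) := by
  rw [config_refill h hm.2]
  exact isWindowMove_sdiff_union (ncard_window i) (le_antisymm (ncard_config_inter_window_le w i) h)
    hm

theorem fits_refill {w : Fin n → Letter} {i m : ℤ} (hw : Fits 0 w)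
    (h : 1 < (config w ∩ window i).ncard) (hm : m ∈ config w ∩ window i) :
    Fits 0 (refill w i m) := by
  obtain ⟨hi, hin, -⟩ := tiles_of_one_lt_ncard h
  have hcard := (isWindowMove_refill h hm).ncard_eq (finite_config w)
  refine ⟨?_, fun k => ?_⟩
  · rw [← injOn_univ, ← ncard_image_iff (toFinite _), image_univ]
    rw [config, config, ncard_range_of_injective hw.1] at hcard
    simpa using hcard
  · have hk : pos (refill w i m) k ∈ config w \ window i ∪ (window i \ {m}) :=
      config_refill h hm.2 ▸ mem_range_self k
    rcases hk with ⟨⟨l, hl⟩, -⟩ | ⟨hk, -⟩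
    · rw [← hl]; exact hw.2 l
    · rw [mem_window] at hk; omega

theorem fits_const_E : Fits 0 (fun _ : Fin n => E) := by
  refine ⟨fun k l h => Fin.ext (by simpa [pos] using h), fun k => ?_⟩
  have := k.isLt
  simp only [pos, offset_E, add_zero]
  omega

theorem one_lt_ncard_config_inter_window {w : Fin n → Letter} (hw : Injective (pos w))
    {i : ℤ} {j k : Fin n} (hjk : j ≠ k) (hj : pos w j ∈ window i) (hk : pos w k ∈ window i) :
    1 < (config w ∩ window i).ncard :=
  (one_lt_ncard_iff ((finite_config w).inter_of_left _)).2
    ⟨_, _, ⟨mem_range_self j, hj⟩, ⟨mem_range_self k, hk⟩, hw.ne hjk⟩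

theorem exists_window_of_A {w : Fin n → Letter} (hw : Fits 0 w) (hA : ∃ k, w k = A) :
    ∃ i : ℤ, 1 < (config w ∩ window i).ncard ∧ 2 * i + 1 ∈ config w := by
  -- the leftmost `A` is preceded by an `E`
  obtain ⟨k, hkA, hmin⟩ := (Finset.univ.filter (w · = A)).exists_min_image (fun k => (k : ℕ))
    (by obtain ⟨k, hk⟩ := hA; exact ⟨k, by simpa using hk⟩)
  simp only [Finset.mem_filter, Finset.mem_univ, true_and] at hkA hmin
  have hk := (hw.2 k).1
  simp only [pos, hkA, offset_A] at hk
  let j : Fin n := ⟨k - 1, by omega⟩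
  have hjA : w j ≠ A := fun h => by have := hmin j h; simp [j] at this; omega
  have hjk : pos w j ≠ pos w k := hw.1.ne (by simp [j, Fin.ext_iff]; omega)
  have hoff := (w j).offset_mem_Icc
  simp only [pos, hkA, offset_A, j, mem_Icc, Ne, ← offset_eq_neg_one_iff] at hjA hjk hoff
  refine ⟨k - 1, one_lt_ncard_config_inter_window hw.1 (j := j) (k := k) ?_ ?_ ?_, ⟨k, ?_⟩⟩
  all_goals simp only [mem_window, pos, hkA, offset_A, j, Fin.ext_iff, ne_eq]; omega

theorem exists_window_of_B {w : Fin n → Letter} (hw : Fits 0 w) (hA : ∀ k, w k ≠ A)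
    (hB : ∃ k, w k = B) : ∃ i : ℤ, 1 < (config w ∩ window i).ncard ∧ 2 * i + 1 ∈ config w := by
  -- the rightmost `B` is followed by an `E`
  obtain ⟨k, hkB, hmax⟩ := (Finset.univ.filter (w · = B)).exists_max_image (fun k => (k : ℕ))
    (by obtain ⟨k, hk⟩ := hB; exact ⟨k, by simpa using hk⟩)
  simp only [Finset.mem_filter, Finset.mem_univ, true_and] at hkB hmax
  have hk := (hw.2 k).2
  simp only [pos, hkB, offset_B] at hk
  let j : Fin n := ⟨k + 1, by omega⟩
  have hjB : w j ≠ B := fun h => by have := hmax j h; simp [j] at this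
  have hjA := hA j
  have hoff := (w j).offset_mem_Icc
  simp only [j, mem_Icc, Ne, ← offset_eq_neg_one_iff, ← offset_eq_one_iff] at hjA hjB hoff
  refine ⟨k, one_lt_ncard_config_inter_window hw.1 (j := k) (k := j) ?_ ?_ ?_,
    ⟨k, by simp only [pos, hkB, offset_B]⟩⟩
  all_goals simp only [mem_window, pos, hkB, offset_B, j, Fin.ext_iff, ne_eq]; omega

theorem exists_window_of_ne_E {w : Fin n → Letter} (hw : Fits 0 w) (h : ∃ k, w k ≠ E) :
    ∃ i : ℤ, 1 < (config w ∩ window i).ncard ∧ 2 * i + 1 ∈ config w := by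
  by_cases hA : ∃ k, w k = A
  · exact exists_window_of_A hw hA
  · push Not at hA
    obtain ⟨k, hk⟩ := h
    exact exists_window_of_B hw hA ⟨k, by cases h : w k <;> simp_all⟩

theorem card_ne_E_refill_lt {w : Fin n → Letter} {i : ℤ} (h : 2 * i + 1 ∈ config w) :
    (Finset.univ.filter (refill w i (2 * i + 1) · ≠ E)).card <
      (Finset.univ.filter (w · ≠ E)).card := by
  obtain ⟨t, ht⟩ := h
  have htw := coe_eq_or_of_pos_mem_window (i := i) (by rw [ht, mem_window]; omega)
  apply Finset.card_lt_card
  refine (Finset.ssubset_iff_of_subset fun k hk => ?_).2 ⟨t, ?_, ?_⟩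
  · rw [Finset.mem_filter_univ, refill] at hk
    rw [Finset.mem_filter_univ]
    split_ifs at hk <;> simp_all
  · have : (w t).offset ≠ 0 := by simp only [pos] at ht; omega
    simpa using this
  · rw [Finset.mem_filter_univ, not_not, refill]
    split_ifs <;> first | rfl | omega

theorem reflTransGen_config_const_E {w : Fin n → Letter} (hw : Fits 0 w) :
    ReflTransGen Move (config fun _ : Fin n => E) (config w) := by
  induction hc : (Finset.univ.filter (w · ≠ E)).card using Nat.strong_induction_on generalizing w
    with
  | _ c ih =>
  by_cases hE : ∀ k, w k = E
  · rw [show w = fun _ => E from funext hE]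
  push Not at hE
  obtain ⟨i, hi, hodd⟩ := exists_window_of_ne_E hw hE
  have hm : 2 * i + 1 ∈ config w ∩ window i := ⟨hodd, by simp [window]⟩
  exact (ih _ (hc ▸ card_ne_E_refill_lt hodd) (fits_refill hw hi hm) rfl).tail
    (ShapeMove.symm ⟨i, isWindowMove_refill hi hm⟩)

theorem orbit_config_const_E :
    {P | ReflTransGen Move (config fun _ : Fin n => E) P} =
      config '' {w : Fin n → Letter | Fits 0 w} := by
  ext P
  constructor
  · intro h
    induction h with
    | refl => exact ⟨_, fits_const_E, rfl⟩
    | tail _ hmove ih =>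
      obtain ⟨w, hw, rfl⟩ := ih
      obtain ⟨i, hmove⟩ := hmove
      obtain ⟨m, hm, rfl⟩ := hmove.exists_eq_sdiff_union (ncard_window i)
      have h : 1 < (config w ∩ window i).ncard := by rw [hmove.1]; norm_num
      exact ⟨refill w i m, fits_refill hw h hm, config_refill h hm.2⟩
  · rintro ⟨w, hw, rfl⟩
    exact reflTransGen_config_const_E hw


theorem pos_cons (s : Letter) (v : Fin n → Letter) :
    pos (Fin.cons s v : Fin (n + 1) → Letter) = Fin.cons s.offset fun k => pos v k + 2 := by
  funext k
  refine Fin.cases ?_ (fun k => ?_) k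
  · simp [pos]
  · simp [pos]
    ring

theorem fits_cons_iff {lo : ℤ} {s : Letter} {v : Fin n → Letter} :
    Fits lo (Fin.cons s v : Fin (n + 1) → Letter) ↔
      lo ≤ s.offset ∧ s.offset ≤ 2 * n ∧ Fits (s.offset - 1) v := by
  have hv := fun k => pos_mem_Icc v k
  have hs := s.offset_mem_Icc
  simp only [mem_Icc] at hv hs
  have hinj : Injective (fun k => pos v k + 2) ↔ Injective (pos v) :=
    (add_left_injective 2).of_comp_iff (pos v)
  simp only [Fits, pos_cons, Fin.cons_injective_iff, hinj, Fin.forall_fin_succ, Fin.cons_zero,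
    Fin.cons_succ, mem_range, not_exists]
  push_cast
  constructor
  · rintro ⟨⟨hne, hinj⟩, ⟨hlo, hhi⟩, hk⟩
    refine ⟨hlo, by omega, hinj, fun k => ⟨?_, by linarith [(hk k).2]⟩⟩
    have := hne k
    have := hv k
    omega
  · rintro ⟨hlo, hhi, hinj, hk⟩
    refine ⟨⟨fun k => ?_, hinj⟩, ⟨hlo, by omega⟩, fun k => ⟨?_, ?_⟩⟩ <;>
      have := hk k <;> omega

theorem fits_iff_fits_neg_one {lo : ℤ} (h : lo ≤ -1) {w : Fin n → Letter} :
    Fits lo w ↔ Fits (-1) w := by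
  have hw := fun k => pos_mem_Icc w k
  simp only [mem_Icc] at hw
  refine and_congr_right fun _ => forall_congr' fun k => ?_
  have := hw k
  constructor <;> rintro ⟨h1, h2⟩ <;> exact ⟨by omega, h2⟩

theorem card_fits_succ (lo : ℤ) (n : ℕ) :
    Nat.card {w : Fin (n + 1) → Letter // Fits lo w} =
      ∑ s : Letter, if lo ≤ s.offset ∧ s.offset ≤ 2 * n then
        Nat.card {v : Fin n → Letter // Fits (s.offset - 1) v} else 0 := by
  calc Nat.card {w : Fin (n + 1) → Letter // Fits lo w}
      = Nat.card (Σ s : Letter, {v : Fin n → Letter // Fits lo (Fin.cons s v)}) :=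
        Nat.card_congr <| ((Equiv.subtypeProdEquivSigmaSubtype fun s v =>
          Fits lo (Fin.cons s v : Fin (n + 1) → Letter)).symm.trans
            (Equiv.subtypeEquiv (Fin.consEquiv fun _ => Letter) fun _ => Iff.rfl)).symm
    _ = _ := by
      rw [Nat.card_sigma]
      refine Finset.sum_congr rfl fun s _ => ?_
      simp_rw [fits_cons_iff]
      split_ifs with h
      · simp only [h.1, h.2, true_and]
      · exact Nat.card_eq_zero.2 (.inl ⟨fun v => h ⟨v.2.1, v.2.2.1⟩⟩)

theorem fits_of_fin_zero (lo : ℤ) (v : Fin 0 → Letter) : Fits lo v :=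
  ⟨fun k => k.elim0, fun k => k.elim0⟩

theorem card_fits_eq_fib (n : ℕ) :
    Nat.card {w : Fin (n + 1) → Letter // Fits 0 w} = Nat.fib (2 * n + 2) ∧
      Nat.card {w : Fin (n + 1) → Letter // Fits (-1) w} = Nat.fib (2 * n + 3) := by
  have hneg_two : ∀ m, Nat.card {w : Fin m → Letter // Fits (-2) w} =
      Nat.card {w : Fin m → Letter // Fits (-1) w} := fun m => by
    simp_rw [fits_iff_fits_neg_one (show (-2 : ℤ) ≤ -1 by norm_num)]
  induction n with
  | zero =>
    rw [card_fits_succ, card_fits_succ]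
    simp [univ_eq, fits_of_fin_zero, Finset.filter_insert, Nat.fib_add_two]
  | succ n ih =>
    have h₀ : (0 : ℤ) ≤ n + 1 := by omega
    have h₁ : (1 : ℤ) ≤ 2 * (n + 1) := by omega
    have h₂ : (-1 : ℤ) ≤ 2 * (n + 1) := by omega
    have h₄ : Nat.fib (2 * n + 4) = Nat.fib (2 * n + 3) + Nat.fib (2 * n + 2) :=
      Nat.fib_add_two.trans (add_comm _ _)
    have h₅ : Nat.fib (2 * n + 5) = Nat.fib (2 * n + 3) + Nat.fib (2 * n + 4) := Nat.fib_add_two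
    rw [show 2 * (n + 1) + 2 = 2 * n + 4 by ring, show 2 * (n + 1) + 3 = 2 * n + 5 by ring, h₅, h₄,
      card_fits_succ, card_fits_succ]
    simp [univ_eq, h₀, h₁, h₂, hneg_two, ih]

end Tiles

end LineSolitaire

open LineSolitaire LineSolitaire.Letter

def exponentSums : F2 →* Multiplicative (ℤ × ℤ) :=
  FreeGroup.lift fun x => Multiplicative.ofAdd (cond x (1, 0) (0, 1))

@[simp] theorem exponentSums_fa : exponentSums fa = Multiplicative.ofAdd (1, 0) :=
  FreeGroup.lift_apply_of

@[simp] theorem exponentSums_fb : exponentSums fb = Multiplicative.ofAdd (0, 1) :=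
  FreeGroup.lift_apply_of

theorem fa_mul_fb_ne_fb_mul_fa : fa * fb ≠ fb * fa := by decide

def lineEmb (m : ℤ) : F2 := fa ^ (m / 2) * fb ^ (m % 2)

@[simp] theorem toAdd_exponentSums_lineEmb (m : ℤ) :
    (exponentSums (lineEmb m)).toAdd = (m / 2, m % 2) := by
  simp [lineEmb]

theorem lineEmb_injective : Injective lineEmb := fun m m' h => by
  have := congrArg (fun x => (exponentSums x).toAdd) h
  simp only [toAdd_exponentSums_lineEmb, Prod.ext_iff] at this
  omega

theorem lineEmb_of_emod_two_eq_zero {m : ℤ} (h : m % 2 = 0) : lineEmb m = fa ^ (m / 2) := by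
  simp [lineEmb, h]

theorem lineEmb_two_mul (i : ℤ) : lineEmb (2 * i) = fa ^ i := by
  rw [lineEmb_of_emod_two_eq_zero (by omega), Int.mul_ediv_cancel_left i two_ne_zero]

theorem lineEmb_two_mul_add_one (i : ℤ) : lineEmb (2 * i + 1) = fa ^ i * fb := by
  simp [lineEmb, show (2 * i + 1) / 2 = i by omega, show (2 * i + 1) % 2 = 1 by omega]

theorem exists_zpow_of_mem_range_of_mul_fa_mem_range {g : F2} (hg : g ∈ range lineEmb)
    (hga : g * fa ∈ range lineEmb) : ∃ i : ℤ, g = fa ^ i := by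
  obtain ⟨m, rfl⟩ := hg
  obtain ⟨m', hm'⟩ := hga
  have hsum := congrArg (fun x => (exponentSums x).toAdd) hm'
  simp only [toAdd_exponentSums_lineEmb, map_mul, toAdd_mul, exponentSums_fa, toAdd_ofAdd,
    Prod.ext_iff, Prod.fst_add, Prod.snd_add] at hsum
  by_cases hm : m % 2 = 0
  · exact ⟨m / 2, lineEmb_of_emod_two_eq_zero hm⟩
  -- otherwise `g * a = a ^ q * b * a` would equal `a ^ (q + 1) * b`
  have hq : m' / 2 = m / 2 + 1 := by omega
  simp only [lineEmb, show m % 2 = 1 by omega, show m' % 2 = 1 by omega, hq, zpow_one,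
    zpow_add_one, mul_assoc, mul_right_inj] at hm'
  exact absurd hm' fa_mul_fb_ne_fb_mul_fa

theorem exists_zpow_of_mem_range_of_mul_fb_mem_range {g : F2} (hg : g ∈ range lineEmb)
    (hgb : g * fb ∈ range lineEmb) : ∃ i : ℤ, g = fa ^ i := by
  obtain ⟨m, rfl⟩ := hg
  obtain ⟨m', hm'⟩ := hgb
  have hsum := congrArg (fun x => (exponentSums x).toAdd) hm'
  simp only [toAdd_exponentSums_lineEmb, map_mul, toAdd_mul, exponentSums_fb, toAdd_ofAdd,
    Prod.ext_iff, Prod.fst_add, Prod.snd_add] at hsum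
  exact ⟨m / 2, lineEmb_of_emod_two_eq_zero (by omega)⟩

theorem exists_zpow_of_mul_fa_mem_range_of_mul_fb_mem_range {g : F2}
    (hga : g * fa ∈ range lineEmb) (hgb : g * fb ∈ range lineEmb) : ∃ i : ℤ, g = fa ^ i := by
  obtain ⟨m, hm⟩ := hga
  obtain ⟨m', hm'⟩ := hgb
  obtain rfl := eq_mul_inv_of_mul_eq hm.symm
  have hsum := congrArg (fun x => (exponentSums x).toAdd) hm'
  simp only [toAdd_exponentSums_lineEmb, map_mul, map_inv, toAdd_mul, toAdd_inv, exponentSums_fa,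
    exponentSums_fb, toAdd_ofAdd, Prod.ext_iff, Prod.fst_add, Prod.snd_add, Prod.fst_neg,
    Prod.snd_neg] at hsum
  exact ⟨m / 2 - 1, by rw [lineEmb_of_emod_two_eq_zero (by omega), zpow_sub_one]⟩

theorem exists_zpow_of_nontrivial {g : F2} (h : (range lineEmb ∩ (g * ·) '' Sfree).Nontrivial) :
    ∃ i : ℤ, g = fa ^ i := by
  obtain ⟨_, ⟨hx, s, hs, rfl⟩, _, ⟨hy, t, ht, rfl⟩, hne⟩ := h
  simp only [Sfree, mem_insert_iff, mem_singleton_iff] at hs ht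
  rcases hs with rfl | rfl | rfl <;> rcases ht with rfl | rfl | rfl <;>
    simp only [mul_one, ne_eq, not_true_eq_false] at hx hy hne
  all_goals first
    | exact exists_zpow_of_mem_range_of_mul_fa_mem_range ‹_› ‹_›
    | exact exists_zpow_of_mem_range_of_mul_fb_mem_range ‹_› ‹_›
    | exact exists_zpow_of_mul_fa_mem_range_of_mul_fb_mem_range ‹_› ‹_›

theorem image_lineEmb_window (i : ℤ) : lineEmb '' window i = (fa ^ i * ·) '' Sfree := by
  simp only [window, Sfree, image_insert_eq, image_singleton, lineEmb_two_mul,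
    lineEmb_two_mul_add_one, show 2 * i + 2 = 2 * (i + 1) by ring, zpow_add_one, mul_one]
  rw [pair_comm (fa ^ i * fb)]

theorem image_lineEmb_config_const_E (n : ℕ) :
    lineEmb '' config (fun _ : Fin n => E) = lineF n := by
  ext x
  simp only [config, pos, offset_E, add_zero, ← range_comp, comp_def, lineEmb_two_mul, lineF,
    mem_range, mem_ofPred_eq]
  constructor
  · rintro ⟨k, rfl⟩
    exact ⟨k, k.isLt, (zpow_natCast fa k).symm⟩
  · rintro ⟨i, hi, rfl⟩
    exact ⟨⟨i, hi⟩, zpow_natCast fa i⟩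

theorem fMove_image_lineEmb_iff {P : Set ℤ} {Q : Set F2} :
    FMove (lineEmb '' P) Q ↔ ∃ P', LineSolitaire.Move P P' ∧ Q = lineEmb '' P' :=
  shapeMove_image_iff lineEmb_injective
    (fun g hg => (exists_zpow_of_nontrivial hg).imp fun i hi => by rw [hi, image_lineEmb_window])
    fun i => ⟨fa ^ i, (image_lineEmb_window i).symm⟩

theorem orbit_lineF (n : ℕ) :
    {Q | ReflTransGen FMove (lineF n) Q} =
      image lineEmb '' {P | ReflTransGen LineSolitaire.Move (config fun _ : Fin n => E) P} := by
  ext Q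
  rw [mem_ofPred_eq, ← image_lineEmb_config_const_E,
    reflTransGen_image_iff fun _ _ => fMove_image_lineEmb_iff]
  simp [eq_comm]

open Real in
theorem fib_two_mul_eq (n : ℕ) :
    (Nat.fib (2 * n) : ℝ) = 1 / (2 ^ n * √5) * ((3 + √5) ^ n - (3 - √5) ^ n) := by
  have hφ : goldenRatio ^ 2 = (3 + √5) / 2 := by rw [goldenRatio_sq, goldenRatio]; ring
  have hψ : goldenConj ^ 2 = (3 - √5) / 2 := by rw [goldenConj_sq, goldenConj]; ring
  rw [coe_fib_eq, pow_mul, pow_mul, hφ, hψ, div_pow, div_pow]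
  field_simp

/-- The solitaire orbit of the line `L_n` on `F₂` has cardinality
`(1/(2ⁿ√5))·((3+√5)ⁿ - (3-√5)ⁿ)`. -/
theorem free_line_orbit_card (n : ℕ) (hn : 1 ≤ n) :
    (({Q : Set F2 | Relation.ReflTransGen FMove (lineF n) Q}.ncard : ℝ)) =
      (1 / (2 ^ n * Real.sqrt 5)) *
        ((3 + Real.sqrt 5) ^ n - (3 - Real.sqrt 5) ^ n) := by
  obtain ⟨n, rfl⟩ := Nat.exists_eq_add_of_le' hn
  rw [orbit_lineF, ncard_image_of_injective _ (image_injective.2 lineEmb_injective),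
    orbit_config_const_E, (config_injOn 0).ncard_image, ← Nat.card_coe_set_eq]
  change (Nat.card {w : Fin (n + 1) → Letter // Fits 0 w} : ℝ) = _
  rw [(card_fits_eq_fib n).1, show 2 * n + 2 = 2 * (n + 1) by ring, fib_two_mul_eq]
end
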